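/- arXiv:2505.13996 — 7 statements merged into one kernel-verified Lean document; each statement's English description precedes it below -/
import Mathlib

section
/- Let G be a connected finite simple graph, Z₁, Z₂ disjoint subsets of V(G), and let (V₁, U, V₂) be an immovable tri-partition for (G, Z₁, Z₂). Let S₁ be a minimal Z₁-connector in G[V₁] and S₂ a minimal Z₂-connector in G[V₂]. Then no connected component of G[V₁] − S₁ and no connected component of G[V₂] − S₂ contains a vertex adjacent to a vertex of U. -/
open SimpleGraph

variable {V : Type*}

/-- `v` is a `Z`-separator in `G[A]`: `Z` contains vertices from at least two
connected components of `G[A] - v`. -/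
def IsSepIn (G : SimpleGraph V) (A Z : Set V) (v : V) : Prop :=
  ∃ a b : ↥(A \ {v}), (a : V) ∈ Z ∧ (b : V) ∈ Z ∧
    ¬(G.induce (A \ {v})).Reachable a b

/-- `S` is a `Z`-connector in `G[A]`: `S ⊆ A`, `Z ⊆ S` and the subgraph induced
on `S` is connected. -/
def IsConnIn (G : SimpleGraph V) (A Z S : Set V) : Prop :=
  S ⊆ A ∧ Z ⊆ S ∧ (G.induce S).Connected

/-- `S` is a minimal `Z`-connector in `G[A]`: it is a `Z`-connector and no
proper subset of it is one. -/
def IsMinConnIn (G : SimpleGraph V) (A Z S : Set V) : Prop :=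
  IsConnIn G A Z S ∧ ∀ S' ⊂ S, ¬IsConnIn G A Z S'

/-- `C` is (the vertex set of) a connected component of `G[A]`:
`C ⊆ A`, `G[C]` is connected (hence nonempty), and `C` is closed under
adjacency inside `A`. -/
def IsCompOf (G : SimpleGraph V) (A C : Set V) : Prop :=
  C ⊆ A ∧ (G.induce C).Connected ∧ ∀ a ∈ C, ∀ b ∈ A, G.Adj a b → b ∈ C

/-- `(V₁, U, V₂)` is a solution tri-partition for `(G[A], Z₁, Z₂)`:
it partitions `A`, `Zᵢ ⊆ Vᵢ`, the three parts induce connected subgraphs,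
and `G[A] - U` has exactly two connected components, namely `G[V₁]` and
`G[V₂]` (both `V₁` and `V₂` are components of `G[A \ U]`, and since they
cover `A \ U` and are disjoint and nonempty, they are the only two). -/
def SolTriPart (G : SimpleGraph V) (A Z₁ Z₂ V₁ U V₂ : Set V) : Prop :=
  V₁ ∪ U ∪ V₂ = A ∧ Disjoint V₁ U ∧ Disjoint U V₂ ∧ Disjoint V₁ V₂ ∧
  Z₁ ⊆ V₁ ∧ Z₂ ⊆ V₂ ∧
  (G.induce V₁).Connected ∧ (G.induce U).Connected ∧ (G.induce V₂).Connected ∧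
  IsCompOf G (A \ U) V₁ ∧ IsCompOf G (A \ U) V₂

/-- `(V₁, U, V₂)` is an immovable tri-partition for `(G, Z₁, Z₂)`: a solution
tri-partition such that every vertex of `Vᵢ \ Zᵢ` having a neighbour in `U`
is a `Zᵢ`-separator in `G[Vᵢ]`. -/
def ImmovTriPart (G : SimpleGraph V) (Z₁ Z₂ V₁ U V₂ : Set V) : Prop :=
  SolTriPart G Set.univ Z₁ Z₂ V₁ U V₂ ∧
  (∀ v ∈ V₁ \ Z₁, (∃ u ∈ U, G.Adj v u) → IsSepIn G V₁ Z₁ v) ∧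
  (∀ v ∈ V₂ \ Z₂, (∃ u ∈ U, G.Adj v u) → IsSepIn G V₂ Z₂ v)

/-- Inclusion homomorphism between induced subgraphs. -/
def inclHom (G : SimpleGraph V) {S T : Set V} (h : S ⊆ T) :
    G.induce S →g G.induce T :=
  ⟨Set.inclusion h, fun hadj => hadj⟩

lemma key_step (G : SimpleGraph V) {Z A S : Set V}
    (hSA : S ⊆ A) (hZS : Z ⊆ S) (hconn : (G.induce S).Connected)
    {a : V} (haS : a ∉ S) (hsep : IsSepIn G A Z a) : False := by
  obtain ⟨x, y, hx, hy, hnr⟩ := hsep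
  have hsub : S ⊆ A \ {a} := fun s hs =>
    ⟨hSA hs, fun h => haS (Set.mem_singleton_iff.mp h ▸ hs)⟩
  have hr : (G.induce S).Reachable ⟨x.1, hZS hx⟩ ⟨y.1, hZS hy⟩ := hconn _ _
  have := hr.map (inclHom G hsub)
  exact hnr this

theorem components_avoiding_connectors_not_adjacent_to_U
    [Fintype V] (G : SimpleGraph V) (hG : G.Connected)
    (Z₁ Z₂ : Set V) (hZ : Disjoint Z₁ Z₂)
    (V₁ U V₂ : Set V) (himm : ImmovTriPart G Z₁ Z₂ V₁ U V₂)
    (S₁ S₂ : Set V)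
    (hS₁ : IsMinConnIn G V₁ Z₁ S₁) (hS₂ : IsMinConnIn G V₂ Z₂ S₂) :
    (∀ C : Set V, IsCompOf G (V₁ \ S₁) C → ∀ a ∈ C, ∀ u ∈ U, ¬G.Adj a u) ∧
    (∀ C : Set V, IsCompOf G (V₂ \ S₂) C → ∀ a ∈ C, ∀ u ∈ U, ¬G.Adj a u) := by
  obtain ⟨_, himm1, himm2⟩ := himm
  obtain ⟨⟨hS₁A, hZ₁S₁, hS₁conn⟩, -⟩ := hS₁
  obtain ⟨⟨hS₂A, hZ₂S₂, hS₂conn⟩, -⟩ := hS₂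
  constructor
  · rintro C ⟨hCsub, -, -⟩ a haC u huU hadj
    have haV : a ∈ V₁ \ S₁ := hCsub haC
    exact key_step G hS₁A hZ₁S₁ hS₁conn haV.2
      (himm1 a ⟨haV.1, fun hz => haV.2 (hZ₁S₁ hz)⟩ ⟨u, huU, hadj⟩)
  · rintro C ⟨hCsub, -, -⟩ a haC u huU hadj
    have haV : a ∈ V₂ \ S₂ := hCsub haC
    exact key_step G hS₂A hZ₂S₂ hS₂conn haV.2
      (himm2 a ⟨haV.1, fun hz => haV.2 (hZ₂S₂ hz)⟩ ⟨u, huU, hadj⟩)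
end

section
/- Let G be a connected finite simple graph, Z₁, Z₂ nonempty disjoint subsets of V(G) with no edge of G between Z₁ and Z₂, and fix z₁ ∈ Z₁ and z₂ ∈ Z₂; let G′ be the graph obtained from G by adding the edge z₁z₂. Let (V₁, U, V₂) be an immovable tri-partition for (G, Z₁, Z₂), let S₁ be a minimal Z₁-connector in G[V₁] and S₂ a minimal Z₂-connector in G[V₂]. Then S = S₁ ∪ S₂ is a minimal (Z₁ ∪ Z₂)-connector in G′. -/
open SimpleGraph

variable {V : Type*}

lemma reach_transfer {H H' : SimpleGraph V} {s t : Set V} (hst : s ⊆ t)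
    (hadj : ∀ x y, x ∈ s → y ∈ s → H.Adj x y → H'.Adj x y) {a b : ↥s}
    (h : (H.induce s).Reachable a b) :
    (H'.induce t).Reachable ⟨a, hst a.2⟩ ⟨b, hst b.2⟩ := by
  let f : H.induce s →g H'.induce t :=
    { toFun := fun x => ⟨x, hst x.2⟩,
      map_rel' := fun {x y} hxy => hadj x y x.2 y.2 hxy }
  exact h.map f

lemma split_reach {H : SimpleGraph V} {A B : Set V} (hd : Disjoint A B)
    {a₀ b₀ : V} (ha₀ : a₀ ∈ A) (hb₀ : b₀ ∈ B)
    (hedge : ∀ x y, H.Adj x y → x ∈ A → y ∈ B → x = a₀ ∧ y = b₀)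
    {a b : ↥(A ∪ B)} (w : (H.induce (A ∪ B)).Walk a b) :
    (∀ (hx : (a:V) ∈ A) (hy : (b:V) ∈ A), (H.induce A).Reachable ⟨a,hx⟩ ⟨b,hy⟩) ∧
    (∀ (hx : (a:V) ∈ A) (hy : (b:V) ∈ B),
      (H.induce A).Reachable ⟨a,hx⟩ ⟨a₀,ha₀⟩ ∧ (H.induce B).Reachable ⟨b₀,hb₀⟩ ⟨b,hy⟩) ∧
    (∀ (hx : (a:V) ∈ B) (hy : (b:V) ∈ A),
      (H.induce B).Reachable ⟨a,hx⟩ ⟨b₀,hb₀⟩ ∧ (H.induce A).Reachable ⟨a₀,ha₀⟩ ⟨b,hy⟩) ∧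
    (∀ (hx : (a:V) ∈ B) (hy : (b:V) ∈ B), (H.induce B).Reachable ⟨a,hx⟩ ⟨b,hy⟩) := by
  induction w with
  | nil =>
    refine ⟨fun hx hy => by rfl, fun hx hy => absurd hy (Set.disjoint_left.mp hd hx),
      fun hx hy => absurd hx (Set.disjoint_left.mp hd hy),
      fun hx hy => by rfl⟩
  | @cons a c b h p ih =>
    have hac : H.Adj (a:V) (c:V) := h
    refine ⟨?_, ?_, ?_, ?_⟩
    · intro hx hy
      rcases c.2 with hc | hc
      · have hadj' : (H.induce A).Adj ⟨a,hx⟩ ⟨c,hc⟩ := hac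
        exact hadj'.reachable.trans (ih.1 hc hy)
      · obtain ⟨ha, hc'⟩ := hedge a c hac hx hc
        have : (⟨(a:V), hx⟩ : ↥A) = ⟨a₀, ha₀⟩ := Subtype.ext ha
        rw [this]
        exact (ih.2.2.1 hc hy).2
    · intro hx hy
      rcases c.2 with hc | hc
      · have hadj' : (H.induce A).Adj ⟨a,hx⟩ ⟨c,hc⟩ := hac
        exact ⟨hadj'.reachable.trans (ih.2.1 hc hy).1, (ih.2.1 hc hy).2⟩
      · obtain ⟨ha, hc'⟩ := hedge a c hac hx hc
        have h1 : (⟨(a:V), hx⟩ : ↥A) = ⟨a₀, ha₀⟩ := Subtype.ext ha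
        have h2 : (⟨b₀, hb₀⟩ : ↥B) = ⟨(c:V), hc⟩ := Subtype.ext hc'.symm
        rw [h1, h2]
        exact ⟨Reachable.refl _, ih.2.2.2 hc hy⟩
    · intro hx hy
      rcases c.2 with hc | hc
      · obtain ⟨hc', ha⟩ := hedge c a hac.symm hc hx
        have h1 : (⟨(a:V), hx⟩ : ↥B) = ⟨b₀, hb₀⟩ := Subtype.ext ha
        have h2 : (⟨a₀, ha₀⟩ : ↥A) = ⟨(c:V), hc⟩ := Subtype.ext hc'.symm
        rw [h1, h2]
        exact ⟨Reachable.refl _, ih.1 hc hy⟩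
      · have hadj' : (H.induce B).Adj ⟨a,hx⟩ ⟨c,hc⟩ := hac
        exact ⟨hadj'.reachable.trans (ih.2.2.1 hc hy).1, (ih.2.2.1 hc hy).2⟩
    · intro hx hy
      rcases c.2 with hc | hc
      · obtain ⟨hc', ha⟩ := hedge c a hac.symm hc hx
        have h1 : (⟨(a:V), hx⟩ : ↥B) = ⟨b₀, hb₀⟩ := Subtype.ext ha
        rw [h1]
        exact (ih.2.1 hc hy).2
      · have hadj' : (H.induce B).Adj ⟨a,hx⟩ ⟨c,hc⟩ := hac
        exact hadj'.reachable.trans (ih.2.2.2 hc hy)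

lemma split_conn {H : SimpleGraph V} {A B : Set V} (hd : Disjoint A B)
    {a₀ b₀ : V} (ha₀ : a₀ ∈ A) (hb₀ : b₀ ∈ B)
    (hedge : ∀ x y, H.Adj x y → x ∈ A → y ∈ B → x = a₀ ∧ y = b₀)
    (h : (H.induce (A ∪ B)).Connected) :
    (H.induce A).Connected ∧ (H.induce B).Connected := by
  constructor
  · haveI : Nonempty ↥A := ⟨⟨a₀, ha₀⟩⟩
    refine Connected.mk fun a b => ?_
    obtain ⟨w⟩ := h.preconnected ⟨a, Or.inl a.2⟩ ⟨b, Or.inl b.2⟩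
    exact (split_reach hd ha₀ hb₀ hedge w).1 a.2 b.2
  · haveI : Nonempty ↥B := ⟨⟨b₀, hb₀⟩⟩
    refine Connected.mk fun a b => ?_
    obtain ⟨w⟩ := h.preconnected ⟨a, Or.inr a.2⟩ ⟨b, Or.inr b.2⟩
    exact (split_reach hd ha₀ hb₀ hedge w).2.2.2 a.2 b.2

theorem union_is_minimal_connector_in_auxiliary_graph
    [Fintype V] (G : SimpleGraph V) (hG : G.Connected)
    (Z₁ Z₂ : Set V) (hne₁ : Z₁.Nonempty) (hne₂ : Z₂.Nonempty)
    (hZ : Disjoint Z₁ Z₂)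
    (hnoedge : ∀ a ∈ Z₁, ∀ b ∈ Z₂, ¬G.Adj a b)
    (z₁ z₂ : V) (hz₁ : z₁ ∈ Z₁) (hz₂ : z₂ ∈ Z₂)
    (V₁ U V₂ : Set V) (himm : ImmovTriPart G Z₁ Z₂ V₁ U V₂)
    (S₁ S₂ : Set V)
    (hS₁ : IsMinConnIn G V₁ Z₁ S₁) (hS₂ : IsMinConnIn G V₂ Z₂ S₂) :
    IsMinConnIn (G ⊔ SimpleGraph.fromEdgeSet {s(z₁, z₂)}) Set.univ
      (Z₁ ∪ Z₂) (S₁ ∪ S₂) := by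
  set G' := G ⊔ SimpleGraph.fromEdgeSet {s(z₁, z₂)} with hG'
  obtain ⟨⟨hpart, hV₁U, hUV₂, hV₁V₂, hZ₁V₁, hZ₂V₂, hc₁, hcU, hc₂, hcomp₁, hcomp₂⟩, _, _⟩ := himm
  obtain ⟨⟨hS₁V₁, hZ₁S₁, hconnS₁⟩, hminS₁⟩ := hS₁
  obtain ⟨⟨hS₂V₂, hZ₂S₂, hconnS₂⟩, hminS₂⟩ := hS₂
  have hz₁z₂ : z₁ ≠ z₂ := fun h => Set.disjoint_left.mp hZ hz₁ (h ▸ hz₂)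
  have hadjG' : G'.Adj z₁ z₂ := Or.inr ⟨rfl, hz₁z₂⟩
  -- no G-edge between V₁ and V₂
  have hsep : ∀ x ∈ V₁, ∀ y ∈ V₂, ¬G.Adj x y := by
    intro x hx y hy hadj
    have hyU : y ∉ U := fun hu => Set.disjoint_left.mp hUV₂ hu hy
    have : y ∈ V₁ := hcomp₁.2.2 x hx y ⟨Set.mem_univ y, hyU⟩ hadj
    exact Set.disjoint_left.mp hV₁V₂ this hy
  -- the only G'-edge between V₁ and V₂ is z₁z₂
  have hedge : ∀ x y, G'.Adj x y → x ∈ V₁ → y ∈ V₂ → x = z₁ ∧ y = z₂ := by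
    intro x y hadj hx hy
    rcases hadj with hadj | ⟨hmem, hne⟩
    · exact absurd hadj (hsep x hx y hy)
    · rcases Sym2.eq_iff.mp hmem with ⟨rfl, rfl⟩ | ⟨rfl, rfl⟩
      · exact ⟨rfl, rfl⟩
      · exact absurd (hZ₂V₂ hz₂) (fun h => Set.disjoint_left.mp hV₁V₂ hx h)
  have hS₁S₂ : Disjoint S₁ S₂ := hV₁V₂.mono hS₁V₁ hS₂V₂
  have hz₁S₁ : z₁ ∈ S₁ := hZ₁S₁ hz₁
  have hz₂S₂ : z₂ ∈ S₂ := hZ₂S₂ hz₂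
  constructor
  · refine ⟨Set.subset_univ _, Set.union_subset_union hZ₁S₁ hZ₂S₂, ?_⟩
    haveI : Nonempty ↥(S₁ ∪ S₂) := ⟨⟨z₁, Or.inl hz₁S₁⟩⟩
    refine Connected.mk fun a b => ?_
    have key : ∀ x : ↥(S₁ ∪ S₂), (G'.induce (S₁ ∪ S₂)).Reachable x ⟨z₁, Or.inl hz₁S₁⟩ := by
      intro x
      rcases x.2 with hx | hx
      · have hr : (G'.induce (S₁ ∪ S₂)).Reachable ⟨x, Or.inl hx⟩ ⟨z₁, Or.inl hz₁S₁⟩ :=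
          reach_transfer (H := G) (H' := G') (s := S₁) (t := S₁ ∪ S₂)
            Set.subset_union_left (fun x y _ _ h => Or.inl h)
            (hconnS₁.preconnected ⟨x, hx⟩ ⟨z₁, hz₁S₁⟩)
        exact hr
      · have hr : (G'.induce (S₁ ∪ S₂)).Reachable ⟨x, Or.inr hx⟩ ⟨z₂, Or.inr hz₂S₂⟩ :=
          reach_transfer (H := G) (H' := G') (s := S₂) (t := S₁ ∪ S₂)
            Set.subset_union_right (fun x y _ _ h => Or.inl h)
            (hconnS₂.preconnected ⟨x, hx⟩ ⟨z₂, hz₂S₂⟩)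
        have hstep : (G'.induce (S₁ ∪ S₂)).Adj ⟨z₂, Or.inr hz₂S₂⟩ ⟨z₁, Or.inl hz₁S₁⟩ :=
          hadjG'.symm
        exact hr.trans hstep.reachable
    exact (key a).trans (key b).symm
  · rintro S' hsub ⟨-, hZS', hconnS'⟩
    set A := S' ∩ S₁ with hA
    set B := S' ∩ S₂ with hB
    have hS'sub : S' ⊆ S₁ ∪ S₂ := hsub.subset
    have hS'eq : S' = A ∪ B := by
      rw [hA, hB, ← Set.inter_union_distrib_left, Set.inter_eq_left.mpr hS'sub]
    have hz₁A : z₁ ∈ A := ⟨hZS' (Or.inl hz₁), hz₁S₁⟩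
    have hz₂B : z₂ ∈ B := ⟨hZS' (Or.inr hz₂), hz₂S₂⟩
    have hAB : Disjoint A B :=
      hS₁S₂.mono Set.inter_subset_right Set.inter_subset_right
    have hedgeAB : ∀ x y, G'.Adj x y → x ∈ A → y ∈ B → x = z₁ ∧ y = z₂ :=
      fun x y hadj hx hy => hedge x y hadj (hS₁V₁ hx.2) (hS₂V₂ hy.2)
    rw [hS'eq] at hconnS'
    obtain ⟨hconnA, hconnB⟩ := split_conn hAB hz₁A hz₂B hedgeAB hconnS'
    -- transfer back to G
    have hback₁ : ∀ x y, x ∈ A → y ∈ A → G'.Adj x y → G.Adj x y := by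
      intro x y hx hy hadj
      rcases hadj with hadj | ⟨hmem, hne⟩
      · exact hadj
      · exfalso
        rcases Sym2.eq_iff.mp hmem with ⟨rfl, rfl⟩ | ⟨rfl, rfl⟩
        · exact Set.disjoint_left.mp hV₁V₂ (hS₁V₁ hy.2) (hZ₂V₂ hz₂)
        · exact Set.disjoint_left.mp hV₁V₂ (hS₁V₁ hx.2) (hZ₂V₂ hz₂)
    have hback₂ : ∀ x y, x ∈ B → y ∈ B → G'.Adj x y → G.Adj x y := by
      intro x y hx hy hadj
      rcases hadj with hadj | ⟨hmem, hne⟩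
      · exact hadj
      · exfalso
        rcases Sym2.eq_iff.mp hmem with ⟨rfl, rfl⟩ | ⟨rfl, rfl⟩
        · exact Set.disjoint_left.mp hV₁V₂ (hZ₁V₁ hz₁) (hS₂V₂ hx.2)
        · exact Set.disjoint_left.mp hV₁V₂ (hZ₁V₁ hz₁) (hS₂V₂ hy.2)
    have hGconnA : (G.induce A).Connected := by
      haveI : Nonempty ↥A := ⟨⟨z₁, hz₁A⟩⟩
      refine Connected.mk fun a b => ?_
      have := reach_transfer (H := G') (H' := G) (s := A) (t := A)
        (le_refl _) hback₁ (hconnA.preconnected a b)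
      exact this
    have hGconnB : (G.induce B).Connected := by
      haveI : Nonempty ↥B := ⟨⟨z₂, hz₂B⟩⟩
      refine Connected.mk fun a b => ?_
      have := reach_transfer (H := G') (H' := G) (s := B) (t := B)
        (le_refl _) hback₂ (hconnB.preconnected a b)
      exact this
    have hZ₁A : Z₁ ⊆ A := fun z hz => ⟨hZS' (Or.inl hz), hZ₁S₁ hz⟩
    have hZ₂B : Z₂ ⊆ B := fun z hz => ⟨hZS' (Or.inr hz), hZ₂S₂ hz⟩
    have hAeq : A = S₁ := by
      by_contra hne
      exact hminS₁ A ((Set.inter_subset_right).ssubset_of_ne hne)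
        ⟨Set.inter_subset_right.trans hS₁V₁, hZ₁A, hGconnA⟩
    have hBeq : B = S₂ := by
      by_contra hne
      exact hminS₂ B ((Set.inter_subset_right).ssubset_of_ne hne)
        ⟨Set.inter_subset_right.trans hS₂V₂, hZ₂B, hGconnB⟩
    rw [hAeq, hBeq] at hS'eq
    exact hsub.ne hS'eq
end

section
/- Let G be a connected finite simple graph, Z₁, Z₂ nonempty disjoint subsets of V(G) with no edge of G between Z₁ and Z₂. Let (V₁, U, V₂) be an immovable tri-partition for (G, Z₁, Z₂), let S₁ be a minimal Z₁-connector in G[V₁], S₂ a minimal Z₂-connector in G[V₂], and set S = S₁ ∪ S₂. Then G[U] is a connected component of G − S, it is the unique connected component of G − S having a neighbor both in S₁ and in S₂, and every other connected component of G − S has neighbors in exactly one of S₁, S₂. -/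
open SimpleGraph

variable {V : Type*}

private lemma reach_mono {G : SimpleGraph V} {S T : Set V} (hst : S ⊆ T) :
    ∀ {a b : ↥S}, (G.induce S).Reachable a b →
    (G.induce T).Reachable ⟨a, hst a.2⟩ ⟨b, hst b.2⟩ := by
  intro a b r
  obtain ⟨p⟩ := r
  induction p with
  | nil => exact Reachable.refl _
  | @cons x y z h q ih =>
      exact (SimpleGraph.Adj.reachable
        (show (G.induce T).Adj ⟨x, hst x.2⟩ ⟨y, hst y.2⟩ from h)).trans ih

private lemma walk_closed {G : SimpleGraph V} {X : Set V}
    (hX : ∀ a ∈ X, ∀ b, G.Adj a b → b ∈ X) {x y : V} (p : G.Walk x y) :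
    x ∈ X → y ∈ X := by
  induction p with
  | nil => exact id
  | cons h _ ih => exact fun hx => ih (hX _ hx _ h)

private lemma closed_eq_univ {G : SimpleGraph V} (hG : G.Connected) {X : Set V}
    (hne : X.Nonempty) (hX : ∀ a ∈ X, ∀ b, G.Adj a b → b ∈ X) : X = Set.univ := by
  obtain ⟨x, hx⟩ := hne
  ext y
  simp only [Set.mem_univ, iff_true]
  obtain ⟨p⟩ := hG.preconnected x y
  exact walk_closed hX p hx

private lemma comp_closed_reach {G : SimpleGraph V} {A C C' : Set V} (hCA : C ⊆ A)
    (hC' : ∀ a ∈ C', ∀ b ∈ A, G.Adj a b → b ∈ C') :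
    ∀ {x y : ↥C}, (G.induce C).Reachable x y → (x : V) ∈ C' → (y : V) ∈ C' := by
  intro x y r
  obtain ⟨p⟩ := r
  induction p with
  | nil => exact id
  | @cons a b c h q ih => exact fun hx => ih (hC' _ hx _ (hCA b.2) h)

private lemma comps_eq {G : SimpleGraph V} {A C C' : Set V} (hC : IsCompOf G A C)
    (hC' : IsCompOf G A C') {x : V} (hx : x ∈ C) (hx' : x ∈ C') : C = C' := by
  obtain ⟨hCA, hCconn, hCcl⟩ := hC
  obtain ⟨hC'A, hC'conn, hC'cl⟩ := hC'
  ext y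
  constructor
  · intro hy
    exact comp_closed_reach hCA hC'cl (hCconn.preconnected ⟨x, hx⟩ ⟨y, hy⟩) hx'
  · intro hy
    exact comp_closed_reach hC'A hCcl (hC'conn.preconnected ⟨x, hx'⟩ ⟨y, hy⟩) hx

private lemma conn_subset_split {G : SimpleGraph V} {C X Y : Set V}
    (hconn : (G.induce C).Connected) (hsub : C ⊆ X ∪ Y)
    (hnoedge : ∀ a ∈ X, ∀ b ∈ Y, ¬G.Adj a b) :
    C ⊆ X ∨ C ⊆ Y := by
  have hclX : ∀ a ∈ X, ∀ b ∈ C, G.Adj a b → b ∈ X := by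
    intro a ha b hb hab
    rcases hsub hb with h | h
    · exact h
    · exact absurd hab (hnoedge a ha b h)
  have hclY : ∀ a ∈ Y, ∀ b ∈ C, G.Adj a b → b ∈ Y := by
    intro a ha b hb hab
    rcases hsub hb with h | h
    · exact absurd hab.symm (hnoedge b h a ha)
    · exact h
  obtain ⟨⟨c, hc⟩⟩ := hconn.nonempty
  rcases hsub hc with hcX | hcY
  · left
    intro y hy
    exact comp_closed_reach (Set.Subset.refl C) hclX
      (hconn.preconnected ⟨c, hc⟩ ⟨y, hy⟩) hcX
  · right
    intro y hy
    exact comp_closed_reach (Set.Subset.refl C) hclY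
      (hconn.preconnected ⟨c, hc⟩ ⟨y, hy⟩) hcY

private lemma key_adj {G : SimpleGraph V} {Z₁ V₁ U S₁ : Set V}
    (hsep : ∀ v ∈ V₁ \ Z₁, (∃ u ∈ U, G.Adj v u) → IsSepIn G V₁ Z₁ v)
    (hS₁ : IsConnIn G V₁ Z₁ S₁) :
    ∀ b ∈ V₁, (∃ u ∈ U, G.Adj b u) → b ∈ S₁ := by
  intro b hb hadj
  by_contra hbS
  obtain ⟨hSA, hZS, hSconn⟩ := hS₁
  have hbZ : b ∉ Z₁ := fun h => hbS (hZS h)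
  obtain ⟨a, c, haZ, hcZ, hnr⟩ := hsep b ⟨hb, hbZ⟩ hadj
  have hsub : S₁ ⊆ V₁ \ {b} := fun x hx => ⟨hSA hx, fun he => hbS (he ▸ hx)⟩
  have r := hSconn.preconnected ⟨(a : V), hZS haZ⟩ ⟨(c : V), hZS hcZ⟩
  have r' := reach_mono hsub r
  exact hnr r'

theorem U_is_unique_component_adjacent_to_both
    [Fintype V] (G : SimpleGraph V) (hG : G.Connected)
    (Z₁ Z₂ : Set V) (hne₁ : Z₁.Nonempty) (hne₂ : Z₂.Nonempty)
    (hZ : Disjoint Z₁ Z₂)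
    (hnoedge : ∀ a ∈ Z₁, ∀ b ∈ Z₂, ¬G.Adj a b)
    (V₁ U V₂ : Set V) (himm : ImmovTriPart G Z₁ Z₂ V₁ U V₂)
    (S₁ S₂ : Set V)
    (hS₁ : IsMinConnIn G V₁ Z₁ S₁) (hS₂ : IsMinConnIn G V₂ Z₂ S₂) :
    IsCompOf G (S₁ ∪ S₂)ᶜ U ∧
    (∃ a ∈ U, ∃ b ∈ S₁, G.Adj a b) ∧ (∃ a ∈ U, ∃ b ∈ S₂, G.Adj a b) ∧
    (∀ C : Set V, IsCompOf G (S₁ ∪ S₂)ᶜ C →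
      (∃ a ∈ C, ∃ b ∈ S₁, G.Adj a b) → (∃ a ∈ C, ∃ b ∈ S₂, G.Adj a b) →
      C = U) ∧
    (∀ C : Set V, IsCompOf G (S₁ ∪ S₂)ᶜ C → C ≠ U →
      ((∃ a ∈ C, ∃ b ∈ S₁, G.Adj a b) ∧ ¬(∃ a ∈ C, ∃ b ∈ S₂, G.Adj a b)) ∨
      (¬(∃ a ∈ C, ∃ b ∈ S₁, G.Adj a b) ∧ (∃ a ∈ C, ∃ b ∈ S₂, G.Adj a b))) := by
  obtain ⟨⟨hpart, hdV₁U, hdUV₂, hdV₁V₂, hZ₁V₁, hZ₂V₂, hconn₁, hconnU, hconn₂,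
    hcomp₁, hcomp₂⟩, hsep₁, hsep₂⟩ := himm
  obtain ⟨hS₁c, -⟩ := hS₁
  obtain ⟨hS₂c, -⟩ := hS₂
  obtain ⟨hS₁V₁, hZS₁, hS₁conn⟩ := hS₁c
  obtain ⟨hS₂V₂, hZS₂, hS₂conn⟩ := hS₂c
  obtain ⟨⟨u₀, hu₀⟩⟩ := hconnU.nonempty
  have hmem : ∀ x : V, x ∈ V₁ ∪ U ∪ V₂ := fun x => hpart ▸ Set.mem_univ x
  have noedge12 : ∀ a ∈ V₁, ∀ b ∈ V₂, ¬G.Adj a b := by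
    intro a ha b hb hab
    have hbnU : b ∉ U := fun h => Set.disjoint_left.mp hdUV₂ h hb
    have hbV₁ := hcomp₁.2.2 a ha b ⟨Set.mem_univ b, hbnU⟩ hab
    exact Set.disjoint_left.mp hdV₁V₂ hbV₁ hb
  have key1 : ∀ b ∈ V₁, (∃ u ∈ U, G.Adj b u) → b ∈ S₁ :=
    key_adj hsep₁ ⟨hS₁V₁, hZS₁, hS₁conn⟩
  have key2 : ∀ b ∈ V₂, (∃ u ∈ U, G.Adj b u) → b ∈ S₂ :=
    key_adj hsep₂ ⟨hS₂V₂, hZS₂, hS₂conn⟩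
  have hUS : U ⊆ (S₁ ∪ S₂)ᶜ := by
    intro u hu
    simp only [Set.mem_compl_iff, Set.mem_union, not_or]
    exact ⟨fun h => Set.disjoint_left.mp hdV₁U (hS₁V₁ h) hu,
           fun h => Set.disjoint_left.mp hdUV₂ hu (hS₂V₂ h)⟩
  have compU : IsCompOf G (S₁ ∪ S₂)ᶜ U := by
    refine ⟨hUS, hconnU, ?_⟩
    intro a ha b hb hab
    rcases hmem b with (h | h) | h
    · exact absurd (key1 b h ⟨a, ha, hab.symm⟩) (fun hS => hb (Or.inl hS))
    · exact h
    · exact absurd (key2 b h ⟨a, ha, hab.symm⟩) (fun hS => hb (Or.inr hS))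
  have edge1 : ∃ a ∈ U, ∃ b ∈ S₁, G.Adj a b := by
    by_contra h
    push_neg at h
    have hcl : ∀ a ∈ V₁, ∀ b, G.Adj a b → b ∈ V₁ := by
      intro a ha b hab
      rcases hmem b with (hb | hb) | hb
      · exact hb
      · exact absurd hab.symm (h b hb a (key1 a ha ⟨b, hb, hab⟩))
      · exact absurd hab (noedge12 a ha b hb)
    have huniv := closed_eq_univ hG ⟨_, hZ₁V₁ hne₁.some_mem⟩ hcl
    exact Set.disjoint_left.mp hdV₁U (huniv ▸ Set.mem_univ u₀) hu₀
  have edge2 : ∃ a ∈ U, ∃ b ∈ S₂, G.Adj a b := by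
    by_contra h
    push_neg at h
    have hcl : ∀ a ∈ V₂, ∀ b, G.Adj a b → b ∈ V₂ := by
      intro a ha b hab
      rcases hmem b with (hb | hb) | hb
      · exact absurd hab.symm (noedge12 b hb a ha)
      · exact absurd hab.symm (h b hb a (key2 a ha ⟨b, hb, hab⟩))
      · exact hb
    have huniv := closed_eq_univ hG ⟨_, hZ₂V₂ hne₂.some_mem⟩ hcl
    have : u₀ ∈ V₂ := huniv ▸ Set.mem_univ u₀
    exact Set.disjoint_left.mp hdUV₂ hu₀ this
  have hnoe' : ∀ a ∈ V₁ \ S₁, ∀ b ∈ V₂ \ S₂, ¬G.Adj a b :=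
    fun a ha b hb => noedge12 a ha.1 b hb.1
  have hCsub : ∀ C, IsCompOf G (S₁ ∪ S₂)ᶜ C → C ≠ U →
      C ⊆ V₁ \ S₁ ∨ C ⊆ V₂ \ S₂ := by
    intro C hC hCU
    have hsub : C ⊆ (V₁ \ S₁) ∪ (V₂ \ S₂) := by
      intro x hx
      have hxS : x ∉ S₁ ∪ S₂ := hC.1 hx
      have hxU : x ∉ U := fun hxU => hCU (comps_eq hC compU hx hxU)
      rcases hmem x with (h | h) | h
      · exact Or.inl ⟨h, fun hS => hxS (Or.inl hS)⟩
      · exact absurd h hxU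
      · exact Or.inr ⟨h, fun hS => hxS (Or.inr hS)⟩
    exact conn_subset_split hC.2.1 hsub hnoe'
  have hone₁ : ∀ C, IsCompOf G (S₁ ∪ S₂)ᶜ C → C ⊆ V₁ \ S₁ →
      (∃ a ∈ C, ∃ b ∈ S₁, G.Adj a b) ∧ ¬(∃ a ∈ C, ∃ b ∈ S₂, G.Adj a b) := by
    intro C hC hCV
    constructor
    · by_contra h
      push_neg at h
      have hcl : ∀ a ∈ C, ∀ b, G.Adj a b → b ∈ C := by
        intro a ha b hab
        by_cases hbS : b ∈ S₁ ∪ S₂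
        · rcases hbS with hb | hb
          · exact absurd hab (h a ha b hb)
          · exact absurd hab (noedge12 a (hCV ha).1 b (hS₂V₂ hb))
        · exact hC.2.2 a ha b hbS hab
      obtain ⟨⟨c, hc⟩⟩ := hC.2.1.nonempty
      have huniv := closed_eq_univ hG ⟨c, hc⟩ hcl
      have hu : u₀ ∈ C := huniv ▸ Set.mem_univ u₀
      exact Set.disjoint_left.mp hdV₁U (hCV hu).1 hu₀
    · rintro ⟨a, ha, b, hb, hab⟩
      exact noedge12 a (hCV ha).1 b (hS₂V₂ hb) hab
  have hone₂ : ∀ C, IsCompOf G (S₁ ∪ S₂)ᶜ C → C ⊆ V₂ \ S₂ →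
      (∃ a ∈ C, ∃ b ∈ S₂, G.Adj a b) ∧ ¬(∃ a ∈ C, ∃ b ∈ S₁, G.Adj a b) := by
    intro C hC hCV
    constructor
    · by_contra h
      push_neg at h
      have hcl : ∀ a ∈ C, ∀ b, G.Adj a b → b ∈ C := by
        intro a ha b hab
        by_cases hbS : b ∈ S₁ ∪ S₂
        · rcases hbS with hb | hb
          · exact absurd hab.symm (noedge12 b (hS₁V₁ hb) a (hCV ha).1)
          · exact absurd hab (h a ha b hb)
        · exact hC.2.2 a ha b hbS hab
      obtain ⟨⟨c, hc⟩⟩ := hC.2.1.nonempty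
      have huniv := closed_eq_univ hG ⟨c, hc⟩ hcl
      have hu : u₀ ∈ C := huniv ▸ Set.mem_univ u₀
      exact Set.disjoint_left.mp hdUV₂ hu₀ (hCV hu).1
    · rintro ⟨a, ha, b, hb, hab⟩
      exact noedge12 b (hS₁V₁ hb) a (hCV ha).1 hab.symm
  refine ⟨compU, edge1, edge2, ?_, ?_⟩
  · intro C hC h1 h2
    by_contra hne
    rcases hCsub C hC hne with h | h
    · exact (hone₁ C hC h).2 h2
    · exact (hone₂ C hC h).2 h1
  · intro C hC hne
    rcases hCsub C hC hne with h | h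
    · exact Or.inl (hone₁ C hC h)
    · exact Or.inr ⟨(hone₂ C hC h).2, (hone₂ C hC h).1⟩
end

section
/- Let G be a connected finite simple graph and Z₁, Z₂ nonempty disjoint subsets of V(G). Suppose S ⊆ V(G) is such that G[S] has exactly two connected components G[S₁] and G[S₂] with Z₁ ⊆ S₁ and Z₂ ⊆ S₂, and suppose exactly one connected component C* of G − S has a neighbor both in S₁ and in S₂. Then (G, Z₁, Z₂) admits a solution tri-partition; specifically, setting U = V(C*), V₁ = S₁ together with the vertex sets of all components of G − S other than C* having a neighbor in S₁, and V₂ = S₂ together with the vertex sets of all components of G − S other than C* having a neighbor in S₂, the triple (V₁, U, V₂) is a solution tri-partition for (G, Z₁, Z₂). -/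
open SimpleGraph

variable {V : Type*}

lemma reach_of_walk_subset {G : SimpleGraph V} {A B : Set V} {x y : ↥A}
    (p : (G.induce A).Walk x y) (hsup : ∀ z ∈ p.support, (z : V) ∈ B) :
    ∀ (hx : (x : V) ∈ B) (hy : (y : V) ∈ B), (G.induce B).Reachable ⟨x, hx⟩ ⟨y, hy⟩ := by
  induction p with
  | nil => intro hx hy; exact Reachable.refl _
  | @cons a c b h q ih =>
    intro hx hy
    have hc : (c : V) ∈ B := hsup c (by simp)
    have hadj : (G.induce B).Adj ⟨(a : V), hx⟩ ⟨(c : V), hc⟩ := h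
    exact hadj.reachable.trans (ih (fun z hz => hsup z (by simp [hz])) hc hy)

lemma exists_comp_mem (G : SimpleGraph V) {A : Set V} {v : V} (hv : v ∈ A) :
    ∃ C, IsCompOf G A C ∧ v ∈ C := by
  classical
  refine ⟨{w | ∃ hw : w ∈ A, (G.induce A).Reachable ⟨v, hv⟩ ⟨w, hw⟩}, ⟨?_, ?_, ?_⟩,
    ⟨hv, Reachable.refl _⟩⟩
  · rintro w ⟨hw, -⟩; exact hw
  · rw [connected_iff_exists_forall_reachable]
    refine ⟨⟨v, hv, Reachable.refl _⟩, ?_⟩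
    rintro ⟨w, hw, hr⟩
    obtain ⟨p⟩ := hr
    refine reach_of_walk_subset p (fun z hz => ?_) _ _
    exact ⟨z.2, ⟨p.takeUntil z hz⟩⟩
  · rintro a ⟨ha, hra⟩ b hb hadj
    exact ⟨hb, hra.trans (Adj.reachable (show (G.induce A).Adj ⟨a, ha⟩ ⟨b, hb⟩ from hadj))⟩

lemma mem_comp_of_walk {G : SimpleGraph V} {A C C' : Set V} (hsub : C ⊆ A)
    (hC' : IsCompOf G A C') : ∀ {x y : ↥C}, (G.induce C).Walk x y →
    (x : V) ∈ C' → (y : V) ∈ C' := by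
  intro x y p
  induction p with
  | nil => exact id
  | @cons a c b h q ih =>
    intro hx
    exact ih (hC'.2.2 _ hx _ (hsub c.2) h)

lemma comp_eq_of_mem {G : SimpleGraph V} {A C C' : Set V} (hC : IsCompOf G A C)
    (hC' : IsCompOf G A C') {v : V} (hv : v ∈ C) (hv' : v ∈ C') : C = C' := by
  have key : ∀ {D D' : Set V}, IsCompOf G A D → IsCompOf G A D' → v ∈ D → v ∈ D' → D ⊆ D' := by
    intro D D' hD hD' hvD hvD' w hw
    obtain ⟨p⟩ := hD.2.1.preconnected ⟨v, hvD⟩ ⟨w, hw⟩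
    exact mem_comp_of_walk hD.1 hD' p hvD'
  exact Set.Subset.antisymm (key hC hC' hv hv') (key hC' hC hv' hv)

lemma nbr_of_walk {G : SimpleGraph V} {S C : Set V} (hC : IsCompOf G Sᶜ C) :
    ∀ {x y : V}, G.Walk x y → x ∈ C → y ∈ S → ∃ a ∈ C, ∃ b ∈ S, G.Adj a b := by
  intro x y p
  induction p with
  | nil => intro hx hy; exact absurd hy (hC.1 hx)
  | @cons a c b h q ih =>
    intro hx hy
    by_cases hc : c ∈ S
    · exact ⟨a, hx, c, hc, h⟩
    · exact ih (hC.2.2 _ hx _ hc h) hy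

lemma comp_has_nbr {G : SimpleGraph V} (hG : G.Connected) {S C : Set V}
    (hC : IsCompOf G Sᶜ C) (hS : S.Nonempty) : ∃ a ∈ C, ∃ b ∈ S, G.Adj a b := by
  obtain ⟨z, hz⟩ := hS
  obtain ⟨⟨v, hv⟩⟩ := hC.2.1.nonempty
  obtain ⟨p⟩ := hG.preconnected v z
  exact nbr_of_walk hC p hv hz

lemma aux_side {G : SimpleGraph V} (hG : G.Connected)
    {S S₁ S₂ Cstar : Set V}
    (hcomp₁ : IsCompOf G S S₁)
    (hdisS : Disjoint S₁ S₂) (hcover : S₁ ∪ S₂ = S)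
    (hCstar : IsCompOf G Sᶜ Cstar)
    (huniq : ∀ C : Set V, IsCompOf G Sᶜ C →
      (∃ a ∈ C, ∃ b ∈ S₁, G.Adj a b) → (∃ a ∈ C, ∃ b ∈ S₂, G.Adj a b) → C = Cstar) :
    Disjoint (S₁ ∪ ⋃₀ {C : Set V | IsCompOf G Sᶜ C ∧ C ≠ Cstar ∧
        ∃ a ∈ C, ∃ b ∈ S₁, G.Adj a b}) Cstar ∧
    (G.induce (S₁ ∪ ⋃₀ {C : Set V | IsCompOf G Sᶜ C ∧ C ≠ Cstar ∧
        ∃ a ∈ C, ∃ b ∈ S₁, G.Adj a b})).Connected ∧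
    IsCompOf G (Set.univ \ Cstar) (S₁ ∪ ⋃₀ {C : Set V | IsCompOf G Sᶜ C ∧ C ≠ Cstar ∧
        ∃ a ∈ C, ∃ b ∈ S₁, G.Adj a b}) := by
  set F : Set (Set V) := {C : Set V | IsCompOf G Sᶜ C ∧ C ≠ Cstar ∧
      ∃ a ∈ C, ∃ b ∈ S₁, G.Adj a b} with hF
  have hdis : Disjoint (S₁ ∪ ⋃₀ F) Cstar := by
    rw [Set.disjoint_left]
    rintro a (h1 | h2) hstar
    · exact (hCstar.1 hstar) (hcover ▸ (Set.mem_union_left _ h1))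
    · obtain ⟨C, ⟨hC, hne, hnb⟩, haC⟩ := h2
      exact hne (comp_eq_of_mem hC hCstar haC hstar)
  have hconn : (G.induce (S₁ ∪ ⋃₀ F)).Connected := by
    obtain ⟨⟨z, hz⟩⟩ := hcomp₁.2.1.nonempty
    apply G.induce_connected_of_patches z (Or.inl hz)
    rintro v (hv | ⟨C, ⟨hC, hne, a, ha, b, hb, hab⟩, hvC⟩)
    · exact ⟨S₁, Set.subset_union_left, hz, hv, hcomp₁.2.1.preconnected _ _⟩
    · refine ⟨S₁ ∪ C, ?_, Or.inl hz, Or.inr hvC, ?_⟩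
      · exact Set.union_subset Set.subset_union_left
          (fun x hx => Or.inr ⟨C, ⟨hC, hne, a, ha, b, hb, hab⟩, hx⟩)
      · exact (connected_induce_union hcomp₁.2.1.preconnected hC.2.1.preconnected hb ha hab.symm).preconnected _ _
  refine ⟨hdis, hconn, ?_, hconn, ?_⟩
  · exact fun a ha => ⟨Set.mem_univ a, Set.disjoint_left.mp hdis ha⟩
  · rintro a ha b ⟨-, hbC⟩ hab
    by_cases hbS : b ∈ S
    · have : b ∈ S₁ ∪ S₂ := hcover ▸ hbS
      rcases this with hb1 | hb2
      · exact Or.inl hb1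
      · rcases ha with ha1 | ⟨C, ⟨hC, hne, hnb⟩, haC⟩
        · exact Or.inl (hcomp₁.2.2 a ha1 b hbS hab)
        · exact absurd (huniq C hC hnb ⟨a, haC, b, hb2, hab⟩) hne
    · rcases ha with ha1 | ⟨C, ⟨hC, hne, hnb⟩, haC⟩
      · obtain ⟨C', hC', hbC'⟩ := exists_comp_mem G (show b ∈ Sᶜ from hbS)
        have hne' : C' ≠ Cstar := fun h => hbC (h ▸ hbC')
        exact Or.inr ⟨C', ⟨hC', hne', b, hbC', a, ha1, hab.symm⟩, hbC'⟩
      · exact Or.inr ⟨C, ⟨hC, hne, hnb⟩, hC.2.2 a haC b hbS hab⟩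

theorem solution_tri_partition_from_connector
    [Fintype V] (G : SimpleGraph V) (hG : G.Connected)
    (Z₁ Z₂ : Set V) (hne₁ : Z₁.Nonempty) (hne₂ : Z₂.Nonempty)
    (hZ : Disjoint Z₁ Z₂)
    (S S₁ S₂ : Set V)
    -- G[S] has exactly two connected components, G[S₁] and G[S₂]
    (hcomp₁ : IsCompOf G S S₁) (hcomp₂ : IsCompOf G S S₂)
    (hdisS : Disjoint S₁ S₂) (hcover : S₁ ∪ S₂ = S)
    (hZ₁ : Z₁ ⊆ S₁) (hZ₂ : Z₂ ⊆ S₂)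
    -- exactly one connected component C* of G - S has a neighbour in both S₁ and S₂
    (Cstar : Set V) (hCstar : IsCompOf G Sᶜ Cstar)
    (hb₁ : ∃ a ∈ Cstar, ∃ b ∈ S₁, G.Adj a b)
    (hb₂ : ∃ a ∈ Cstar, ∃ b ∈ S₂, G.Adj a b)
    (huniq : ∀ C : Set V, IsCompOf G Sᶜ C →
      (∃ a ∈ C, ∃ b ∈ S₁, G.Adj a b) → (∃ a ∈ C, ∃ b ∈ S₂, G.Adj a b) →
      C = Cstar) :
    SolTriPart G Set.univ Z₁ Z₂
      (S₁ ∪ ⋃₀ {C : Set V | IsCompOf G Sᶜ C ∧ C ≠ Cstar ∧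
        ∃ a ∈ C, ∃ b ∈ S₁, G.Adj a b})
      Cstar
      (S₂ ∪ ⋃₀ {C : Set V | IsCompOf G Sᶜ C ∧ C ≠ Cstar ∧
        ∃ a ∈ C, ∃ b ∈ S₂, G.Adj a b}) := by
  have aux₁ := aux_side hG hcomp₁ hdisS hcover hCstar huniq
  have aux₂ := aux_side hG hcomp₂ hdisS.symm (by rw [Set.union_comm]; exact hcover) hCstar
    (fun C hC h2 h1 => huniq C hC h1 h2)
  have hSne : S.Nonempty := ⟨hne₁.some, hcomp₁.1 (hZ₁ hne₁.some_mem)⟩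
  refine ⟨?_, aux₁.1, aux₂.1.symm, ?_, fun z hz => Or.inl (hZ₁ hz), fun z hz => Or.inl (hZ₂ hz),
    aux₁.2.1, hCstar.2.1, aux₂.2.1, aux₁.2.2, aux₂.2.2⟩
  · apply Set.eq_univ_of_forall
    intro v
    by_cases hvS : v ∈ S
    · have : v ∈ S₁ ∪ S₂ := hcover ▸ hvS
      rcases this with h | h
      · exact Or.inl (Or.inl (Or.inl h))
      · exact Or.inr (Or.inl h)
    · obtain ⟨C, hC, hvC⟩ := exists_comp_mem G (show v ∈ Sᶜ from hvS)
      by_cases hCe : C = Cstar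
      · exact Or.inl (Or.inr (hCe ▸ hvC))
      · obtain ⟨a, ha, b, hb, hab⟩ := comp_has_nbr hG hC hSne
        have : b ∈ S₁ ∪ S₂ := hcover ▸ hb
        rcases this with hb1 | hb2
        · exact Or.inl (Or.inl (Or.inr ⟨C, ⟨hC, hCe, a, ha, b, hb1, hab⟩, hvC⟩))
        · exact Or.inr (Or.inr ⟨C, ⟨hC, hCe, a, ha, b, hb2, hab⟩, hvC⟩)
  · rw [Set.disjoint_left]
    rintro a (h1 | ⟨C, ⟨hC, hne, hnb⟩, haC⟩) (h2 | ⟨C', ⟨hC', hne', hnb'⟩, haC'⟩)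
    · exact Set.disjoint_left.mp hdisS h1 h2
    · exact hC'.1 haC' ((hcover ▸ Set.mem_union_left _ h1))
    · exact hC.1 haC ((hcover ▸ Set.mem_union_right _ h2))
    · have hEq := comp_eq_of_mem hC hC' haC haC'
      exact hne (huniq C hC hnb (hEq ▸ hnb'))
end

section
/- Let G be a connected finite simple graph, Z₁, Z₂ nonempty disjoint subsets of V(G) with no edge of G between Z₁ and Z₂, fix z₁ ∈ Z₁ and z₂ ∈ Z₂, and let G′ be the graph obtained from G by adding the edge z₁z₂. Then (G, Z₁, Z₂) admits a solution tri-partition if and only if there exists a minimal (Z₁ ∪ Z₂)-connector S in G′ such that G[S] has exactly two connected components G[S₁] and G[S₂] with Z₁ ⊆ S₁ and Z₂ ⊆ S₂, and exactly one connected component of G − S has a neighbor both in S₁ and in S₂. -/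
open SimpleGraph

variable {V : Type*}

namespace ThreeDCS
variable {G : SimpleGraph V}



lemma reach_mono {s t : Set V} (h : s ⊆ t) {a b : V} (ha : a ∈ s) (hb : b ∈ s)
    (r : (G.induce s).Reachable ⟨a, ha⟩ ⟨b, hb⟩) :
    (G.induce t).Reachable ⟨a, h ha⟩ ⟨b, h hb⟩ :=
  r.map (G.induceHomOfLE h).toHom

lemma reach_of_closed {A B : Set V} (hcl : ∀ a ∈ B, ∀ b ∈ A, G.Adj a b → b ∈ B) :
    ∀ {x y : ↥A} (_ : (G.induce A).Walk x y) (hx : (x : V) ∈ B),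
      ∃ hy : (y : V) ∈ B, (G.induce B).Reachable ⟨x, hx⟩ ⟨y, hy⟩ := by
  intro x y w
  induction w with
  | nil => exact fun hx => ⟨hx, Reachable.refl _⟩
  | @cons u c y h p ih =>
    intro hx
    have hadj : G.Adj (u : V) (c : V) := h
    have hc : (c : V) ∈ B := hcl _ hx _ c.2 hadj
    obtain ⟨hy, hr⟩ := ih hc
    exact ⟨hy, (Adj.reachable (by exact hadj : (G.induce B).Adj ⟨u, hx⟩ ⟨c, hc⟩)).trans hr⟩

lemma comp_mem_of_reach {A C : Set V} (hC : IsCompOf G A C) {x y : V}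
    (hx : x ∈ C) (hy : y ∈ A)
    (r : (G.induce A).Reachable ⟨x, hC.1 hx⟩ ⟨y, hy⟩) : y ∈ C := by
  obtain ⟨w⟩ := r
  exact (reach_of_closed hC.2.2 w hx).1

lemma exists_comp_mem {A : Set V} {x : V} (hx : x ∈ A) :
    ∃ C, IsCompOf G A C ∧ x ∈ C := by
  classical
  refine ⟨{y | ∃ hy : y ∈ A, (G.induce A).Reachable ⟨x, hx⟩ ⟨y, hy⟩},
    ⟨fun y hy => hy.1, ?_, ?_⟩, hx, Reachable.refl _⟩
  · set B : Set V := {y | ∃ hy : y ∈ A, (G.induce A).Reachable ⟨x, hx⟩ ⟨y, hy⟩} with hB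
    have hcl : ∀ a ∈ B, ∀ b ∈ A, G.Adj a b → b ∈ B := by
      rintro a ⟨haA, hra⟩ b hbA hab
      exact ⟨hbA, hra.trans (Adj.reachable (by exact hab))⟩
    rw [connected_iff_exists_forall_reachable]
    refine ⟨⟨x, ⟨hx, Reachable.refl _⟩⟩, ?_⟩
    rintro ⟨y, hyA, hry⟩
    obtain ⟨w⟩ := hry
    obtain ⟨hy, hr⟩ := reach_of_closed hcl w ⟨hx, Reachable.refl _⟩
    exact hr
  · rintro a ⟨haA, hra⟩ b hbA hab
    exact ⟨hbA, hra.trans (Adj.reachable (by exact hab))⟩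

lemma comp_eq_of_mem {A C D : Set V} (hC : IsCompOf G A C) (hD : IsCompOf G A D)
    {x : V} (hxC : x ∈ C) (hxD : x ∈ D) : C = D := by
  apply Set.eq_of_subset_of_subset
  · intro y hyC
    have r : (G.induce C).Reachable ⟨x, hxC⟩ ⟨y, hyC⟩ := hC.2.1 _ _
    exact comp_mem_of_reach hD hxD (hC.1 hyC) (reach_mono hC.1 hxC hyC r)
  · intro y hyD
    have r : (G.induce D).Reachable ⟨x, hxD⟩ ⟨y, hyD⟩ := hD.2.1 _ _
    exact comp_mem_of_reach hC hxC (hD.1 hyD) (reach_mono hD.1 hxD hyD r)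

lemma exists_boundary {A P : Set V} :
    ∀ {x y : ↥A} (_ : (G.induce A).Walk x y) (hx : (x : V) ∉ P) (_ : (y : V) ∈ P),
      ∃ a b, ∃ (ha : a ∈ A \ P), b ∈ A ∩ P ∧ G.Adj a b ∧
        (G.induce (A \ P)).Reachable ⟨x, ⟨x.2, hx⟩⟩ ⟨a, ha⟩ := by
  intro x y w
  induction w with
  | nil => exact fun hx hy => absurd hy hx
  | @cons u c y h p ih =>
    intro hx hy
    have hadj : G.Adj (u : V) (c : V) := h
    by_cases hc : (c : V) ∈ P
    · exact ⟨u, c, ⟨u.2, hx⟩, ⟨c.2, hc⟩, hadj, Reachable.refl _⟩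
    · obtain ⟨a, b, ha, hb, hab, hr⟩ := ih hc hy
      exact ⟨a, b, ha, hb, hab,
        (Adj.reachable (by exact hadj : (G.induce (A \ P)).Adj ⟨u, ⟨u.2, hx⟩⟩ ⟨c, ⟨c.2, hc⟩⟩)).trans hr⟩

lemma exists_boundary' {P : Set V} :
    ∀ {x y : V} (_ : G.Walk x y) (hx : x ∉ P) (_ : y ∈ P),
      ∃ a b, ∃ (_ : a ∉ P), b ∈ P ∧ G.Adj a b ∧
        (G.induce Pᶜ).Reachable ⟨x, hx⟩ ⟨a, ‹a ∉ P›⟩ := by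
  intro x y w
  induction w with
  | nil => exact fun hx hy => absurd hy hx
  | @cons u c y h p ih =>
    intro hx hy
    by_cases hc : c ∈ P
    · exact ⟨u, c, hx, hc, h, Reachable.refl _⟩
    · obtain ⟨a, b, ha, hb, hab, hr⟩ := ih hc hy
      exact ⟨a, b, ha, hb, hab,
        (Adj.reachable (by exact h : (G.induce Pᶜ).Adj ⟨u, hx⟩ ⟨c, hc⟩)).trans hr⟩

lemma comp_disjoint_of_ne {A C D : Set V} (hC : IsCompOf G A C) (hD : IsCompOf G A D)
    (hne : C ≠ D) : Disjoint C D := by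
  rw [Set.disjoint_left]
  intro x hxC hxD
  exact hne (comp_eq_of_mem hC hD hxC hxD)

lemma side_walk {W₁ W₂ C : Set V}
    (hnc : ∀ a ∈ W₁, ∀ b ∈ W₂, ¬G.Adj a b) (hC : C ⊆ W₁ ∪ W₂) :
    ∀ {x y : ↥C} (_ : (G.induce C).Walk x y), (x : V) ∈ W₁ → (y : V) ∈ W₁ := by
  intro x y w
  induction w with
  | nil => exact id
  | @cons u c y h p ih =>
    intro hx
    have hadj : G.Adj (u : V) (c : V) := h
    rcases hC c.2 with hc | hc
    · exact ih hc
    · exact absurd hadj (hnc _ hx _ hc)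

lemma side_of_connected {W₁ W₂ C : Set V}
    (hnc : ∀ a ∈ W₁, ∀ b ∈ W₂, ¬G.Adj a b) (hC : C ⊆ W₁ ∪ W₂)
    (hconn : (G.induce C).Connected) {x : V} (hxC : x ∈ C) (hx : x ∈ W₁) : C ⊆ W₁ := by
  intro y hyC
  obtain ⟨w⟩ := hconn ⟨x, hxC⟩ ⟨y, hyC⟩
  exact side_walk hnc hC w hx

lemma exists_minimal_mem {α : Type*} [Finite α] (F : Set (Set α)) {T : Set α} (hT : T ∈ F) :
    ∃ S ∈ F, S ⊆ T ∧ ∀ S' ⊂ S, S' ∉ F := by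
  have key : ∀ n (T : Set α), T ∈ F → T.ncard ≤ n → ∃ S ∈ F, S ⊆ T ∧ ∀ S' ⊂ S, S' ∉ F := by
    intro n
    induction n with
    | zero =>
      intro T hT h0
      refine ⟨T, hT, subset_rfl, fun S' hss hS' => ?_⟩
      have := Set.ncard_lt_ncard hss (Set.toFinite T)
      omega
    | succ n ih =>
      intro T hT hle
      by_cases hex : ∃ S' ⊂ T, S' ∈ F
      · obtain ⟨S', hss, hS'⟩ := hex
        have hlt := Set.ncard_lt_ncard hss (Set.toFinite T)
        obtain ⟨S, hSF, hsub, hmin⟩ := ih S' hS' (by omega)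
        exact ⟨S, hSF, hsub.trans hss.subset, hmin⟩
      · exact ⟨T, hT, subset_rfl, fun S' hss hS' => hex ⟨S', hss, hS'⟩⟩
  exact key T.ncard T hT le_rfl



lemma cross_once {G G' : SimpleGraph V} {S W₁ : Set V} {z₁ : V}
    (hsame : ∀ a ∈ S ∩ W₁, ∀ b ∈ S ∩ W₁, G'.Adj a b → G.Adj a b)
    (hcross : ∀ a ∈ S ∩ W₁, ∀ b : V, b ∈ S → b ∉ W₁ → G'.Adj a b → a = z₁)
    (hcross' : ∀ a : V, a ∈ S → a ∉ W₁ → ∀ b ∈ S ∩ W₁, G'.Adj a b → b = z₁)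
    (hz₁ : z₁ ∈ S ∩ W₁) :
    ∀ {x y : ↥S} (_ : (G'.induce S).Walk x y) (hy : (y : V) ∈ W₁),
      (∀ hx : (x : V) ∈ W₁,
        (G.induce (S ∩ W₁)).Reachable ⟨x, ⟨x.2, hx⟩⟩ ⟨y, ⟨y.2, hy⟩⟩) ∧
      ((x : V) ∉ W₁ → (G.induce (S ∩ W₁)).Reachable ⟨z₁, hz₁⟩ ⟨y, ⟨y.2, hy⟩⟩) := by
  intro x y w
  induction w with
  | nil => exact fun hy => ⟨fun hx => Reachable.refl _, fun hx => absurd hy hx⟩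
  | @cons u c y h p ih =>
    intro hy
    have hadj : G'.Adj (u : V) (c : V) := h
    constructor
    · intro hx
      by_cases hc : (c : V) ∈ W₁
      · have hGadj : G.Adj (u : V) (c : V) := hsame _ ⟨u.2, hx⟩ _ ⟨c.2, hc⟩ hadj
        exact (Adj.reachable (by exact hGadj :
          (G.induce (S ∩ W₁)).Adj ⟨u, ⟨u.2, hx⟩⟩ ⟨c, ⟨c.2, hc⟩⟩)).trans ((ih hy).1 hc)
      · have huz : (u : V) = z₁ := hcross _ ⟨u.2, hx⟩ _ c.2 hc hadj
        have : (⟨u, ⟨u.2, hx⟩⟩ : ↥(S ∩ W₁)) = ⟨z₁, hz₁⟩ := Subtype.ext huz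
        rw [this]
        exact (ih hy).2 hc
    · intro hx
      by_cases hc : (c : V) ∈ W₁
      · have hcz : (c : V) = z₁ := hcross' _ u.2 hx _ ⟨c.2, hc⟩ hadj
        have : (⟨c, ⟨c.2, hc⟩⟩ : ↥(S ∩ W₁)) = ⟨z₁, hz₁⟩ := Subtype.ext hcz
        exact this ▸ (ih hy).1 hc
      · exact (ih hy).2 hc

lemma conn_side {G G' : SimpleGraph V} {S W₁ : Set V} {z₁ : V}
    (hconn : (G'.induce S).Connected)
    (hsame : ∀ a ∈ S ∩ W₁, ∀ b ∈ S ∩ W₁, G'.Adj a b → G.Adj a b)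
    (hcross : ∀ a ∈ S ∩ W₁, ∀ b : V, b ∈ S → b ∉ W₁ → G'.Adj a b → a = z₁)
    (hcross' : ∀ a : V, a ∈ S → a ∉ W₁ → ∀ b ∈ S ∩ W₁, G'.Adj a b → b = z₁)
    (hz₁ : z₁ ∈ S ∩ W₁) :
    (G.induce (S ∩ W₁)).Connected := by
  rw [connected_iff_exists_forall_reachable]
  refine ⟨⟨z₁, hz₁⟩, ?_⟩
  rintro ⟨v, hvS, hvW⟩
  obtain ⟨w⟩ := hconn ⟨z₁, hz₁.1⟩ ⟨v, hvS⟩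
  exact (cross_once hsame hcross hcross' hz₁ w hvW).1 hz₁.2

lemma backward_side {S T₁ T₂ C : Set V}
    (hT₁ : IsCompOf G S T₁) (hT₂ : IsCompOf G S T₂) (hd : Disjoint T₁ T₂)
    (hu : T₁ ∪ T₂ = S) (hC : IsCompOf G Sᶜ C)
    (huniq : ∀ D, IsCompOf G Sᶜ D → (∃ a ∈ D, ∃ b ∈ T₁, G.Adj a b) →
      (∃ a ∈ D, ∃ b ∈ T₂, G.Adj a b) → D = C) :
    IsCompOf G (Set.univ \ C)
      (T₁ ∪ ⋃₀ {D | IsCompOf G Sᶜ D ∧ D ≠ C ∧ ∃ a ∈ D, ∃ b ∈ T₁, G.Adj a b}) := by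
  set 𝒟 : Set (Set V) :=
    {D | IsCompOf G Sᶜ D ∧ D ≠ C ∧ ∃ a ∈ D, ∃ b ∈ T₁, G.Adj a b} with h𝒟
  have hWsub : T₁ ∪ ⋃₀ 𝒟 ⊆ Set.univ \ C := by
    rintro x (hx | ⟨D, ⟨hD, hDne, -⟩, hxD⟩)
    · refine ⟨trivial, fun hxC => ?_⟩
      exact (hC.1 hxC) (hT₁.1 hx)
    · refine ⟨trivial, fun hxC => hDne ?_⟩
      exact comp_eq_of_mem hD hC hxD hxC
  obtain ⟨⟨t₁, ht₁⟩⟩ := hT₁.2.1.nonempty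
  refine ⟨hWsub, ?_, ?_⟩
  · apply G.induce_connected_of_patches t₁ (Set.mem_union_left _ ht₁)
    rintro v (hv | ⟨D, hD𝒟, hvD⟩)
    · refine ⟨T₁, Set.subset_union_left, ht₁, hv, hT₁.2.1.preconnected _ _⟩
    · obtain ⟨hD, hDne, a, haD, b, hbT₁, hab⟩ := hD𝒟
      refine ⟨T₁ ∪ D, Set.union_subset Set.subset_union_left
        (fun y hy => Set.mem_union_right _ ⟨D, ⟨hD, hDne, a, haD, b, hbT₁, hab⟩, hy⟩),
        Or.inl ht₁, Or.inr hvD, ?_⟩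
      exact (connected_induce_union hT₁.2.1.preconnected hD.2.1.preconnected hbT₁ haD hab.symm).preconnected _ _
  · rintro a ha b ⟨-, hbC⟩ hab
    by_cases hbS : b ∈ S
    · have hb' : b ∈ T₁ ∪ T₂ := hu ▸ hbS
      rcases hb' with hbT₁ | hbT₂
      · exact Or.inl hbT₁
      · exfalso
        rcases ha with haT₁ | ⟨D, ⟨hD, hDne, hDadj⟩, haD⟩
        · have : b ∈ T₁ := hT₁.2.2 a haT₁ b hbS hab
          exact Set.disjoint_left.mp hd this hbT₂
        · exact hDne (huniq D hD hDadj ⟨a, haD, b, hbT₂, hab⟩)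
    · obtain ⟨Db, hDb, hbDb⟩ := exists_comp_mem (G := G) (A := Sᶜ) hbS
      rcases ha with haT₁ | ⟨D, ⟨hD, hDne, hDadj⟩, haD⟩
      · have hDbne : Db ≠ C := fun h => hbC (h ▸ hbDb)
        exact Or.inr ⟨Db, ⟨hDb, hDbne, b, hbDb, a, haT₁, hab.symm⟩, hbDb⟩
      · have : b ∈ D := hD.2.2 a haD b hbS hab
        exact Or.inr ⟨D, ⟨hD, hDne, hDadj⟩, this⟩


end ThreeDCS

theorem three_dcs_iff_minimal_connector
    [Fintype V] (G : SimpleGraph V) (hG : G.Connected)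
    (Z₁ Z₂ : Set V) (hne₁ : Z₁.Nonempty) (hne₂ : Z₂.Nonempty)
    (hZ : Disjoint Z₁ Z₂)
    (hnoedge : ∀ a ∈ Z₁, ∀ b ∈ Z₂, ¬G.Adj a b)
    (z₁ z₂ : V) (hz₁ : z₁ ∈ Z₁) (hz₂ : z₂ ∈ Z₂) :
    (∃ V₁ U V₂ : Set V, SolTriPart G Set.univ Z₁ Z₂ V₁ U V₂) ↔
    (∃ S S₁ S₂ : Set V,
      IsMinConnIn (G ⊔ SimpleGraph.fromEdgeSet {s(z₁, z₂)}) Set.univ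
        (Z₁ ∪ Z₂) S ∧
      -- G[S] has exactly two connected components, G[S₁] and G[S₂]
      IsCompOf G S S₁ ∧ IsCompOf G S S₂ ∧ Disjoint S₁ S₂ ∧ S₁ ∪ S₂ = S ∧
      Z₁ ⊆ S₁ ∧ Z₂ ⊆ S₂ ∧
      -- exactly one connected component of G - S has a neighbour in both S₁ and S₂
      (∃! C : Set V, IsCompOf G Sᶜ C ∧
        (∃ a ∈ C, ∃ b ∈ S₁, G.Adj a b) ∧ (∃ a ∈ C, ∃ b ∈ S₂, G.Adj a b))) := by
  classical
  set G' := G ⊔ SimpleGraph.fromEdgeSet {s(z₁, z₂)} with hG'def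
  have hz12 : z₁ ≠ z₂ := fun h => Set.disjoint_left.mp hZ hz₁ (h ▸ hz₂)
  have hG'adj_iff : ∀ a b : V,
      G'.Adj a b ↔ G.Adj a b ∨ (a = z₁ ∧ b = z₂) ∨ (a = z₂ ∧ b = z₁) := by
    intro a b
    rw [hG'def, SimpleGraph.sup_adj, SimpleGraph.fromEdgeSet_adj]
    simp only [Set.mem_singleton_iff, Sym2.eq_iff]
    constructor
    · rintro (h | ⟨(⟨h1, h2⟩ | ⟨h1, h2⟩), hne⟩)
      exacts [Or.inl h, Or.inr (Or.inl ⟨h1, h2⟩), Or.inr (Or.inr ⟨h1, h2⟩)]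
    · rintro (h | ⟨rfl, rfl⟩ | ⟨rfl, rfl⟩)
      exacts [Or.inl h, Or.inr ⟨Or.inl ⟨rfl, rfl⟩, hz12⟩,
        Or.inr ⟨Or.inr ⟨rfl, rfl⟩, hz12.symm⟩]
  constructor
  · rintro ⟨V₁, U, V₂, hA, hd1U, hdU2, hd12, hZV1, hZV2, hc1, hcU, hc2, hcomp1, hcomp2⟩
    have hz₁V₁ : z₁ ∈ V₁ := hZV1 hz₁
    have hz₂V₂ : z₂ ∈ V₂ := hZV2 hz₂
    have hadj' : G'.Adj z₁ z₂ := (hG'adj_iff z₁ z₂).mpr (Or.inr (Or.inl ⟨rfl, rfl⟩))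
    have hnc : ∀ a ∈ V₁, ∀ b ∈ V₂, ¬G.Adj a b := by
      intro a ha b hb hab
      have hbU : b ∉ U := fun h => Set.disjoint_left.mp hdU2 h hb
      have : b ∈ V₁ := hcomp1.2.2 a ha b ⟨trivial, hbU⟩ hab
      exact Set.disjoint_left.mp hd12 this hb
    have hsplit : ∀ v : V, v ∈ V₁ ∨ v ∈ U ∨ v ∈ V₂ := by
      intro v
      have hv : v ∈ V₁ ∪ U ∪ V₂ := hA ▸ Set.mem_univ v
      rcases hv with (h | h) | h
      exacts [Or.inl h, Or.inr (Or.inl h), Or.inr (Or.inr h)]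
    have hile : ∀ s : Set V, G.induce s ≤ G'.induce s := by
      intro s a b hab
      exact Or.inl hab
    have hconnU12 : (G'.induce (V₁ ∪ V₂)).Connected :=
      connected_induce_union (hc1.mono (hile V₁)).preconnected (hc2.mono (hile V₂)).preconnected
        hz₁V₁ hz₂V₂ hadj'
    obtain ⟨S, hSF, hSsubT, hSmin⟩ := ThreeDCS.exists_minimal_mem
      {T : Set V | T ⊆ V₁ ∪ V₂ ∧ IsConnIn G' Set.univ (Z₁ ∪ Z₂) T}
      (T := V₁ ∪ V₂)
      ⟨subset_rfl, Set.subset_univ _, Set.union_subset_union hZV1 hZV2, hconnU12⟩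
    obtain ⟨hSsub, -, hZS, hconnS⟩ :
        S ⊆ V₁ ∪ V₂ ∧ S ⊆ Set.univ ∧ Z₁ ∪ Z₂ ⊆ S ∧ (G'.induce S).Connected :=
      ⟨hSF.1, hSF.2.1, hSF.2.2.1, hSF.2.2.2⟩
    have hminS : IsMinConnIn G' Set.univ (Z₁ ∪ Z₂) S :=
      ⟨hSF.2, fun S' hss hconn => hSmin S' hss ⟨hss.subset.trans hSF.1, hconn⟩⟩
    have hz₁S : z₁ ∈ S := hZS (Or.inl hz₁)
    have hz₂S : z₂ ∈ S := hZS (Or.inr hz₂)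
    -- crossing edge characterization, side 1
    have hsame₁ : ∀ a ∈ S ∩ V₁, ∀ b ∈ S ∩ V₁, G'.Adj a b → G.Adj a b := by
      intro a ha b hb hab
      rcases (hG'adj_iff a b).mp hab with h | ⟨rfl, rfl⟩ | ⟨rfl, rfl⟩
      · exact h
      · exact absurd hb.2 (fun hh => Set.disjoint_left.mp hd12 hh hz₂V₂)
      · exact absurd ha.2 (fun hh => Set.disjoint_left.mp hd12 hh hz₂V₂)
    have hcross₁ : ∀ a ∈ S ∩ V₁, ∀ b : V, b ∈ S → b ∉ V₁ → G'.Adj a b → a = z₁ := by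
      intro a ha b hbS hbV hab
      have hbV₂ : b ∈ V₂ := (hSsub hbS).resolve_left hbV
      rcases (hG'adj_iff a b).mp hab with h | ⟨h1, h2⟩ | ⟨h1, h2⟩
      · exact absurd h (hnc a ha.2 b hbV₂)
      · exact h1
      · exact absurd (h1 ▸ ha.2) (fun hh => Set.disjoint_left.mp hd12 hh hz₂V₂)
    have hcross₁' : ∀ a : V, a ∈ S → a ∉ V₁ → ∀ b ∈ S ∩ V₁, G'.Adj a b → b = z₁ := by
      intro a haS haV b hb hab
      have haV₂ : a ∈ V₂ := (hSsub haS).resolve_left haV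
      rcases (hG'adj_iff a b).mp hab with h | ⟨h1, h2⟩ | ⟨h1, h2⟩
      · exact absurd h.symm (hnc b hb.2 a haV₂)
      · exact absurd (h2 ▸ hb.2) (fun hh => Set.disjoint_left.mp hd12 hh hz₂V₂)
      · exact h2
    -- crossing edge characterization, side 2
    have hsame₂ : ∀ a ∈ S ∩ V₂, ∀ b ∈ S ∩ V₂, G'.Adj a b → G.Adj a b := by
      intro a ha b hb hab
      rcases (hG'adj_iff a b).mp hab with h | ⟨rfl, rfl⟩ | ⟨rfl, rfl⟩
      · exact h
      · exact absurd ha.2 (fun hh => Set.disjoint_left.mp hd12 hz₁V₁ hh)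
      · exact absurd hb.2 (fun hh => Set.disjoint_left.mp hd12 hz₁V₁ hh)
    have hcross₂ : ∀ a ∈ S ∩ V₂, ∀ b : V, b ∈ S → b ∉ V₂ → G'.Adj a b → a = z₂ := by
      intro a ha b hbS hbV hab
      have hbV₁ : b ∈ V₁ := (hSsub hbS).resolve_right hbV
      rcases (hG'adj_iff a b).mp hab with h | ⟨h1, h2⟩ | ⟨h1, h2⟩
      · exact absurd h.symm (hnc b hbV₁ a ha.2)
      · exact absurd (h1 ▸ ha.2) (fun hh => Set.disjoint_left.mp hd12 hz₁V₁ hh)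
      · exact h1
    have hcross₂' : ∀ a : V, a ∈ S → a ∉ V₂ → ∀ b ∈ S ∩ V₂, G'.Adj a b → b = z₂ := by
      intro a haS haV b hb hab
      have haV₁ : a ∈ V₁ := (hSsub haS).resolve_right haV
      rcases (hG'adj_iff a b).mp hab with h | ⟨h1, h2⟩ | ⟨h1, h2⟩
      · exact absurd h (hnc a haV₁ b hb.2)
      · exact h2
      · exact absurd (h2 ▸ hb.2) (fun hh => Set.disjoint_left.mp hd12 hz₁V₁ hh)
    have hcS₁ : (G.induce (S ∩ V₁)).Connected :=
      ThreeDCS.conn_side hconnS hsame₁ hcross₁ hcross₁' ⟨hz₁S, hz₁V₁⟩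
    have hcS₂ : (G.induce (S ∩ V₂)).Connected :=
      ThreeDCS.conn_side hconnS hsame₂ hcross₂ hcross₂' ⟨hz₂S, hz₂V₂⟩
    have hcompS₁ : IsCompOf G S (S ∩ V₁) := by
      refine ⟨Set.inter_subset_left, hcS₁, ?_⟩
      intro a ha b hbS hab
      rcases hSsub hbS with hb1 | hb2
      · exact ⟨hbS, hb1⟩
      · exact absurd hab (hnc a ha.2 b hb2)
    have hcompS₂ : IsCompOf G S (S ∩ V₂) := by
      refine ⟨Set.inter_subset_left, hcS₂, ?_⟩
      intro a ha b hbS hab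
      rcases hSsub hbS with hb1 | hb2
      · exact absurd hab.symm (hnc b hb1 a ha.2)
      · exact ⟨hbS, hb2⟩
    have hdisjS : Disjoint (S ∩ V₁) (S ∩ V₂) :=
      hd12.mono Set.inter_subset_right Set.inter_subset_right
    have hunionS : (S ∩ V₁) ∪ (S ∩ V₂) = S := by
      rw [← Set.inter_union_distrib_left]
      exact Set.inter_eq_left.mpr hSsub
    -- the unique component
    obtain ⟨⟨u₀, hu₀U⟩⟩ := hcU.nonempty
    have hUSc : U ⊆ Sᶜ := by
      intro u hu huS
      rcases hSsub huS with h | h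
      · exact Set.disjoint_left.mp hd1U h hu
      · exact Set.disjoint_left.mp hdU2 hu h
    obtain ⟨C₀, hC₀comp, hu₀C₀⟩ := ThreeDCS.exists_comp_mem (G := G) (hUSc hu₀U)
    have hUC₀ : U ⊆ C₀ := by
      intro u hu
      exact ThreeDCS.comp_mem_of_reach hC₀comp hu₀C₀ (hUSc hu)
        (ThreeDCS.reach_mono hUSc hu₀U hu (hcU.preconnected ⟨u₀, hu₀U⟩ ⟨u, hu⟩))
    have hu₀S : u₀ ∉ S := hUSc hu₀U
    -- a boundary-finding routine for each side
    have hfind : ∀ (W : Set V), z₁ ∈ W ∨ z₂ ∈ W →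
        (G.induce (U ∪ W)).Connected → (∃ zz, zz ∈ S ∩ W ∧ (zz = z₁ ∨ zz = z₂)) →
        ∃ a ∈ C₀, ∃ b ∈ S ∩ W, G.Adj a b := by
      intro W _ hconnUW ⟨zz, hzzSW, _⟩
      obtain ⟨wk⟩ := hconnUW.preconnected ⟨u₀, Or.inl hu₀U⟩ ⟨zz, Or.inr hzzSW.2⟩
      obtain ⟨a, b, ha, hb, hab, hr⟩ :=
        ThreeDCS.exists_boundary (P := S) wk hu₀S hzzSW.1
      have hbSW : b ∈ S ∩ W := by
        rcases hb.1 with h | h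
        · exact absurd hb.2 (hUSc h)
        · exact ⟨hb.2, h⟩
      have hsub : (U ∪ W) \ S ⊆ Sᶜ := fun x hx => hx.2
      have haC₀ : a ∈ C₀ :=
        ThreeDCS.comp_mem_of_reach hC₀comp hu₀C₀ ha.2
          (ThreeDCS.reach_mono hsub ⟨Or.inl hu₀U, hu₀S⟩ ha hr)
      exact ⟨a, haC₀, b, hbSW, hab⟩
    -- edges from U to each side
    have hedge : ∀ (W W' : Set V), W = V₁ ∧ W' = V₂ ∨ W = V₂ ∧ W' = V₁ →
        ∀ zw ∈ W, ∃ u ∈ U, ∃ w ∈ W, G.Adj u w := by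
      intro W W' hWW zw hzw
      have hu₀W : u₀ ∉ W := by
        rcases hWW with ⟨rfl, rfl⟩ | ⟨rfl, rfl⟩
        · exact fun h => Set.disjoint_left.mp hd1U h hu₀U
        · exact fun h => Set.disjoint_left.mp hdU2 hu₀U h
      obtain ⟨wk⟩ := hG.preconnected u₀ zw
      obtain ⟨a, b, ha, hb, hab, -⟩ := ThreeDCS.exists_boundary' wk hu₀W hzw
      rcases hsplit a with h | h | h
      · rcases hWW with ⟨rfl, rfl⟩ | ⟨rfl, rfl⟩
        · exact absurd h ha
        · exact absurd hab (hnc a h b hb)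
      · exact ⟨a, h, b, hb, hab⟩
      · rcases hWW with ⟨rfl, rfl⟩ | ⟨rfl, rfl⟩
        · exact absurd hab.symm (hnc b hb a h)
        · exact absurd h ha
    obtain ⟨u₁, hu₁, w₁, hw₁, huw₁⟩ := hedge V₁ V₂ (Or.inl ⟨rfl, rfl⟩) z₁ hz₁V₁
    obtain ⟨u₂, hu₂, w₂, hw₂, huw₂⟩ := hedge V₂ V₁ (Or.inr ⟨rfl, rfl⟩) z₂ hz₂V₂
    have hadjC₁ : ∃ a ∈ C₀, ∃ b ∈ S ∩ V₁, G.Adj a b :=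
      hfind V₁ (Or.inl hz₁V₁)
        (connected_induce_union hcU.preconnected hc1.preconnected hu₁ hw₁ huw₁)
        ⟨z₁, ⟨hz₁S, hz₁V₁⟩, Or.inl rfl⟩
    have hadjC₂ : ∃ a ∈ C₀, ∃ b ∈ S ∩ V₂, G.Adj a b :=
      hfind V₂ (Or.inr hz₂V₂)
        (connected_induce_union hcU.preconnected hc2.preconnected hu₂ hw₂ huw₂)
        ⟨z₂, ⟨hz₂S, hz₂V₂⟩, Or.inr rfl⟩
    refine ⟨S, S ∩ V₁, S ∩ V₂, hminS, hcompS₁, hcompS₂, hdisjS, hunionS,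
      fun x hx => ⟨hZS (Or.inl hx), hZV1 hx⟩,
      fun x hx => ⟨hZS (Or.inr hx), hZV2 hx⟩,
      C₀, ⟨hC₀comp, hadjC₁, hadjC₂⟩, ?_⟩
    rintro C ⟨hCcomp, ⟨a₁, ha₁C, b₁, hb₁, hab₁⟩, ⟨a₂, ha₂C, b₂, hb₂, hab₂⟩⟩
    by_cases hCU : ∃ u ∈ C, u ∈ U
    · obtain ⟨u, huC, huU⟩ := hCU
      exact ThreeDCS.comp_eq_of_mem hCcomp hC₀comp huC (hUC₀ huU)
    · exfalso
      push_neg at hCU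
      have hCsub : C ⊆ V₁ ∪ V₂ := by
        intro v hv
        rcases hsplit v with h | h | h
        exacts [Or.inl h, absurd h (hCU v hv), Or.inr h]
      rcases hCsub ha₁C with h | h
      · have hCV₁ : C ⊆ V₁ :=
          ThreeDCS.side_of_connected hnc hCsub hCcomp.2.1 ha₁C h
        exact hnc a₂ (hCV₁ ha₂C) b₂ hb₂.2 hab₂
      · exact hnc b₁ hb₁.2 a₁ h hab₁.symm
  · rintro ⟨S, S₁, S₂, hmin, hcompS₁, hcompS₂, hd12, hu12, hZ₁S, hZ₂S, hEU⟩
    obtain ⟨C, ⟨hCcomp, hCadj₁, hCadj₂⟩, huniq'⟩ := hEU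
    have huniq : ∀ D, IsCompOf G Sᶜ D → (∃ a ∈ D, ∃ b ∈ S₁, G.Adj a b) →
        (∃ a ∈ D, ∃ b ∈ S₂, G.Adj a b) → D = C :=
      fun D h1 h2 h3 => huniq' D ⟨h1, h2, h3⟩
    have hz₁S : z₁ ∈ S := hcompS₁.1 (hZ₁S hz₁)
    set 𝒟₁ : Set (Set V) :=
      {D | IsCompOf G Sᶜ D ∧ D ≠ C ∧ ∃ a ∈ D, ∃ b ∈ S₁, G.Adj a b} with h𝒟₁
    set 𝒟₂ : Set (Set V) :=
      {D | IsCompOf G Sᶜ D ∧ D ≠ C ∧ ∃ a ∈ D, ∃ b ∈ S₂, G.Adj a b} with h𝒟₂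
    have hW₁ : IsCompOf G (Set.univ \ C) (S₁ ∪ ⋃₀ 𝒟₁) :=
      ThreeDCS.backward_side hcompS₁ hcompS₂ hd12 hu12 hCcomp huniq
    have hW₂ : IsCompOf G (Set.univ \ C) (S₂ ∪ ⋃₀ 𝒟₂) :=
      ThreeDCS.backward_side hcompS₂ hcompS₁ hd12.symm
        (by rw [Set.union_comm]; exact hu12) hCcomp
        (fun D h1 h2 h3 => huniq' D ⟨h1, h3, h2⟩)
    refine ⟨S₁ ∪ ⋃₀ 𝒟₁, C, S₂ ∪ ⋃₀ 𝒟₂, ?_, ?_, ?_, ?_,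
      fun x hx => Or.inl (hZ₁S hx), fun x hx => Or.inl (hZ₂S hx),
      hW₁.2.1, hCcomp.2.1, hW₂.2.1, hW₁, hW₂⟩
    · -- coverage
      apply Set.eq_univ_of_forall
      intro x
      by_cases hxS : x ∈ S
      · have : x ∈ S₁ ∪ S₂ := hu12 ▸ hxS
        rcases this with h | h
        · exact Or.inl (Or.inl (Or.inl h))
        · exact Or.inr (Or.inl h)
      · obtain ⟨D, hD, hxD⟩ := ThreeDCS.exists_comp_mem (G := G) (A := Sᶜ) hxS
        by_cases hDC : D = C
        · exact Or.inl (Or.inr (hDC ▸ hxD))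
        · obtain ⟨wk⟩ := hG.preconnected x z₁
          obtain ⟨a, b, ha, hbS, hab, hr⟩ :=
            ThreeDCS.exists_boundary' wk hxS hz₁S
          have haD : a ∈ D := ThreeDCS.comp_mem_of_reach hD hxD ha hr
          have hb12 : b ∈ S₁ ∪ S₂ := hu12 ▸ hbS
          rcases hb12 with hb | hb
          · exact Or.inl (Or.inl (Or.inr ⟨D, ⟨hD, hDC, a, haD, b, hb, hab⟩, hxD⟩))
          · exact Or.inr (Or.inr ⟨D, ⟨hD, hDC, a, haD, b, hb, hab⟩, hxD⟩)
    · exact Set.disjoint_left.mpr fun x hx => (hW₁.1 hx).2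
    · exact Set.disjoint_right.mpr fun x hx => (hW₂.1 hx).2
    · -- Disjoint W₁ W₂
      rw [Set.disjoint_left]
      rintro x (hx | ⟨D, ⟨hD, hDne, hDadj⟩, hxD⟩) hx2
      · rcases hx2 with h | ⟨E, ⟨hE, -, -⟩, hxE⟩
        · exact Set.disjoint_left.mp hd12 hx h
        · exact (hE.1 hxE) (hcompS₁.1 hx)
      · rcases hx2 with h | ⟨E, ⟨hE, hEne, hEadj⟩, hxE⟩
        · exact (hD.1 hxD) (hcompS₂.1 h)
        · by_cases hDE : D = E
          · subst hDE
            exact hDne (huniq D hD hDadj hEadj)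
          · exact Set.disjoint_left.mp
              (ThreeDCS.comp_disjoint_of_ne hD hE hDE) hxD hxE
end

section
/- Let G be a connected finite simple graph. If G has a P₅-witness structure, then G has a P₅-witness structure (W₁, W₂, W₃, W₄, W₅) in which W₁ and W₅ are singleton sets. -/
open SimpleGraph

variable {V : Type*}

/-- A `P₅`-witness structure of `G`: a partition of `V(G)` into five nonempty
sets, each inducing a connected subgraph, with an edge between `W i` and
`W j` (for `i ≠ j`) iff `|i - j| = 1`. -/
def P5Witness (G : SimpleGraph V) (W : Fin 5 → Set V) : Prop :=
  (∀ i, (W i).Nonempty) ∧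
  (∀ i j, i ≠ j → Disjoint (W i) (W j)) ∧
  (⋃ i, W i) = Set.univ ∧
  (∀ i, (G.induce (W i)).Connected) ∧
  (∀ i j, i ≠ j →
    ((∃ a ∈ W i, ∃ b ∈ W j, G.Adj a b) ↔
      ((i : ℕ) + 1 = (j : ℕ) ∨ (j : ℕ) + 1 = (i : ℕ))))

lemma induce_singleton_connected (G : SimpleGraph V) (x : V) :
    (G.induce ({x} : Set V)).Connected := by
  haveI : Nonempty ↥({x} : Set V) := ⟨⟨x, rfl⟩⟩
  refine ⟨fun u v => ?_⟩
  have : u = v := Subtype.ext (u.2.trans v.2.symm)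
  exact this ▸ Reachable.refl _

lemma reach_induce_mono (G : SimpleGraph V) {B S : Set V} (h : B ⊆ S)
    {a b : ↥B} (hr : (G.induce B).Reachable a b) :
    (G.induce S).Reachable ⟨a, h a.2⟩ ⟨b, h b.2⟩ := by
  have := hr.map (G.induceHomOfLE h).toHom
  exact this

lemma induce_connected_of_reach (G : SimpleGraph V) {B S : Set V}
    (hBS : B ⊆ S) (hBne : B.Nonempty) (hBconn : (G.induce B).Connected)
    (hreach : ∀ y : ↥S, ∃ z : ↥S, (z : V) ∈ B ∧ (G.induce S).Reachable y z) :
    (G.induce S).Connected := by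
  obtain ⟨b0, hb0⟩ := hBne
  haveI : Nonempty ↥S := ⟨⟨b0, hBS hb0⟩⟩
  refine ⟨fun u v => ?_⟩
  obtain ⟨zu, hzu, hu⟩ := hreach u
  obtain ⟨zv, hzv, hv⟩ := hreach v
  have h1 : (G.induce B).Reachable ⟨zu, hzu⟩ ⟨zv, hzv⟩ := hBconn.preconnected _ _
  have h2 : (G.induce S).Reachable ⟨zu, hBS hzu⟩ ⟨zv, hBS hzv⟩ :=
    reach_induce_mono G hBS h1
  exact hu.trans (h2.trans hv.symm)

lemma exists_good_end [Fintype V] (G : SimpleGraph V) {A B : Set V}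
    (hA : (G.induce A).Connected) (hBA : B ⊆ A) (hBne : B.Nonempty)
    (hAB : ∃ a ∈ A, a ∉ B) :
    ∃ x ∈ A, x ∉ B ∧ ∀ y : ↥(A \ {x}), ∃ z : ↥(A \ {x}), (z : V) ∈ B ∧
      (G.induce (A \ {x})).Reachable y z := by
  classical
  obtain ⟨b0, hb0⟩ := hBne
  set G' := G.induce A with hG'
  let d : ↥A → ℕ := fun v => sInf {n | ∃ w : ↥A, (w : V) ∈ B ∧ G'.dist v w = n}
  have hd_mem : ∀ v : ↥A, ∃ w : ↥A, (w : V) ∈ B ∧ G'.dist v w = d v := fun v =>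
    Nat.sInf_mem (⟨G'.dist v ⟨b0, hBA hb0⟩, ⟨b0, hBA hb0⟩, hb0, rfl⟩ :
      {n | ∃ w : ↥A, (w : V) ∈ B ∧ G'.dist v w = n}.Nonempty)
  have hd_le : ∀ v w : ↥A, (w : V) ∈ B → d v ≤ G'.dist v w := fun v w hw =>
    Nat.sInf_le ⟨w, hw, rfl⟩
  obtain ⟨a0, ha0A, ha0B⟩ := hAB
  obtain ⟨x, hxmem, hxmax⟩ := Finset.exists_max_image
    (Finset.univ.filter (fun v : ↥A => (v : V) ∉ B)) d
    ⟨⟨a0, ha0A⟩, by simp [ha0B]⟩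
  simp only [Finset.mem_filter, Finset.mem_univ, true_and] at hxmem
  have hxmax' : ∀ v : ↥A, (v : V) ∉ B → d v ≤ d x := fun v hv =>
    hxmax v (by simp [hv])
  refine ⟨x, x.2, hxmem, ?_⟩
  have claim : ∀ n : ℕ, ∀ y : ↥A, ∀ hyx : (y : V) ≠ (x : V), d y ≤ n →
      ∃ z : ↥(A \ {(x : V)}), (z : V) ∈ B ∧
        (G.induce (A \ {(x : V)})).Reachable ⟨y, y.2, hyx⟩ z := by
    intro n
    induction n with
    | zero =>
      intro y hyx hdy
      obtain ⟨w, hwB, hwd⟩ := hd_mem y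
      have h0 : G'.dist y w = 0 := by omega
      have hyw : y = w := by
        rcases SimpleGraph.dist_eq_zero_iff_eq_or_not_reachable.mp h0 with h | h
        · exact h
        · exact absurd (hA.preconnected y w) h
      exact ⟨⟨y, y.2, hyx⟩, hyw ▸ hwB, Reachable.refl _⟩
    | succ n ih =>
      intro y hyx hdy
      by_cases hyB : (y : V) ∈ B
      · exact ⟨⟨y, y.2, hyx⟩, hyB, Reachable.refl _⟩
      rcases Nat.lt_or_ge (d y) (n + 1) with hlt | hge
      · exact ih y hyx (by omega)
      have hdy' : d y = n + 1 := le_antisymm hdy hge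
      obtain ⟨w, hwB, hwd⟩ := hd_mem y
      obtain ⟨p, hp⟩ := hA.exists_walk_length_eq_dist y w
      cases p with
      | nil =>
        rw [hwd, hdy'] at hp; simp at hp
      | @cons _ y' _ hadj q =>
        have hq : q.length = n := by
          have : q.length + 1 = n + 1 := by
            simpa [hwd, hdy'] using hp
          omega
        have hdy'le : d y' ≤ n := by
          have h1 : G'.dist y' w ≤ q.length := SimpleGraph.dist_le q
          exact le_trans (hd_le y' w hwB) (by omega)
        have hy'x : (y' : V) ≠ (x : V) := by
          intro h
          have hxy' : x = y' := Subtype.ext h.symm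
          have : d y ≤ d x := hxmax' y hyB
          rw [hxy'] at this
          omega
        obtain ⟨z, hzB, hzr⟩ := ih y' hy'x hdy'le
        have hadj' : (G.induce (A \ {(x : V)})).Adj ⟨y, y.2, hyx⟩ ⟨y', y'.2, hy'x⟩ := by
          exact hadj
        exact ⟨z, hzB, hadj'.reachable.trans hzr⟩
  intro y
  obtain ⟨z, hz, hr⟩ := claim (d ⟨y.1, y.2.1⟩) ⟨y.1, y.2.1⟩ y.2.2 le_rfl
  exact ⟨z, hz, hr⟩

theorem exists_P5_witness_with_singleton_ends
    [Fintype V] (G : SimpleGraph V) (hG : G.Connected)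
    (h : ∃ W : Fin 5 → Set V, P5Witness G W) :
    ∃ W : Fin 5 → Set V, P5Witness G W ∧
      (∃ x : V, W 0 = {x}) ∧ (∃ y : V, W 4 = {y}) := by
  classical
  obtain ⟨W, hne, hdisj, hcover, hconn, hedge⟩ := h
  -- existing edges
  obtain ⟨a01, ha01, b01, hb01, hab01⟩ := (hedge 0 1 (by decide)).mpr (by decide)
  obtain ⟨a12, ha12, b12, hb12, hab12⟩ := (hedge 1 2 (by decide)).mpr (by decide)
  obtain ⟨a23, ha23, b23, hb23, hab23⟩ := (hedge 2 3 (by decide)).mpr (by decide)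
  obtain ⟨a34, ha34, b34, hb34, hab34⟩ := (hedge 3 4 (by decide)).mpr (by decide)
  -- no edges between non-consecutive classes
  have noedge : ∀ i j : Fin 5, ¬((i : ℕ) + 1 = (j : ℕ) ∨ (j : ℕ) + 1 = (i : ℕ)) →
      i ≠ j → ∀ a ∈ W i, ∀ b ∈ W j, ¬ G.Adj a b := by
    intro i j hcon hij a ha b hb hab
    exact hcon ((hedge i j hij).mp ⟨a, ha, b, hb, hab⟩)
  -- induced connectivity of the two end unions
  have hA0 : (G.induce (W 0 ∪ W 1)).Connected :=
    connected_induce_union (hconn 0).preconnected (hconn 1).preconnected ha01 hb01 hab01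
  have hA4 : (G.induce (W 3 ∪ W 4)).Connected := by
    have : (G.induce (W 4 ∪ W 3)).Connected :=
      connected_induce_union (hconn 4).preconnected (hconn 3).preconnected hb34 ha34 hab34.symm
    rwa [Set.union_comm] at this
  obtain ⟨x0, hx0ne⟩ := hne 0
  obtain ⟨y4, hy4ne⟩ := hne 4
  have hx0nB : x0 ∉ W 1 := fun hh => (hdisj 0 1 (by decide)).ne_of_mem hx0ne hh rfl
  have hy4nB : y4 ∉ W 3 := fun hh => (hdisj 4 3 (by decide)).ne_of_mem hy4ne hh rfl
  obtain ⟨x, hxA, hxnB, hxreach⟩ := exists_good_end G hA0 Set.subset_union_right (hne 1)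
    ⟨x0, Or.inl hx0ne, hx0nB⟩
  obtain ⟨y, hyA, hynB, hyreach⟩ := exists_good_end G hA4 Set.subset_union_left (hne 3)
    ⟨y4, Or.inr hy4ne, hy4nB⟩
  have hxW0 : x ∈ W 0 := hxA.resolve_right hxnB
  have hyW4 : y ∈ W 4 := hyA.resolve_left hynB
  -- uniqueness of membership
  have humem : ∀ a : V, ∀ i j : Fin 5, a ∈ W i → a ∈ W j → i = j := by
    intro a i j hi hj
    by_contra hij
    exact (hdisj i j hij).ne_of_mem hi hj rfl
  set S1 : Set V := (W 0 ∪ W 1) \ {x} with hS1def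
  set S3 : Set V := (W 3 ∪ W 4) \ {y} with hS3def
  have hW1S1 : W 1 ⊆ S1 := fun a ha =>
    ⟨Or.inr ha, fun hax => hxnB (Set.mem_singleton_iff.mp hax ▸ ha)⟩
  have hW3S3 : W 3 ⊆ S3 := fun a ha =>
    ⟨Or.inl ha, fun hay => hynB (Set.mem_singleton_iff.mp hay ▸ ha)⟩
  -- connectivity of S1 and S3
  have hS1conn : (G.induce S1).Connected :=
    induce_connected_of_reach G hW1S1 (hne 1) (hconn 1) hxreach
  have hS3conn : (G.induce S3).Connected :=
    induce_connected_of_reach G hW3S3 (hne 3) (hconn 3) hyreach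
  -- neighbour of x in S1
  have hxadj : ∃ b ∈ S1, G.Adj x b := by
    obtain ⟨c, hc⟩ := hne 1
    have hxc : (⟨x, hxA⟩ : ↥(W 0 ∪ W 1)) ≠ ⟨c, Or.inr hc⟩ := by
      intro hh
      have hxc2 : x = c := congrArg Subtype.val hh
      exact hxnB (hxc2 ▸ hc)
    obtain ⟨p⟩ := hA0.preconnected ⟨x, hxA⟩ ⟨c, Or.inr hc⟩
    cases p with
    | nil => exact absurd rfl hxc
    | @cons _ y' _ hadj q =>
      have hGadj : G.Adj x (y' : V) := hadj
      exact ⟨y', ⟨y'.2, fun hh => hGadj.ne' (Set.mem_singleton_iff.mp hh)⟩, hGadj⟩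
  have hyadj : ∃ b ∈ S3, G.Adj y b := by
    obtain ⟨c, hc⟩ := hne 3
    have hyc : (⟨y, hyA⟩ : ↥(W 3 ∪ W 4)) ≠ ⟨c, Or.inl hc⟩ := by
      intro hh
      have hyc2 : y = c := congrArg Subtype.val hh
      exact hynB (hyc2 ▸ hc)
    obtain ⟨p⟩ := hA4.preconnected ⟨y, hyA⟩ ⟨c, Or.inl hc⟩
    cases p with
    | nil => exact absurd rfl hyc
    | @cons _ y' _ hadj q =>
      have hGadj : G.Adj y (y' : V) := hadj
      exact ⟨y', ⟨y'.2, fun hh => hGadj.ne' (Set.mem_singleton_iff.mp hh)⟩, hGadj⟩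
  -- the new witness
  refine ⟨![{x}, S1, W 2, S3, {y}], ⟨?_, ?_, ?_, ?_, ?_⟩, ⟨x, rfl⟩, ⟨y, rfl⟩⟩
  · -- nonempty
    intro i
    fin_cases i
    · exact ⟨x, rfl⟩
    · exact ⟨b01, hW1S1 hb01⟩
    · exact hne 2
    · exact ⟨b23, hW3S3 hb23⟩
    · exact ⟨y, rfl⟩
  · -- disjoint
    have key : ∀ a : V, ∀ i j : Fin 5, i ≠ j →
        a ∈ (![{x}, S1, W 2, S3, {y}] : Fin 5 → Set V) i →
        a ∉ (![{x}, S1, W 2, S3, {y}] : Fin 5 → Set V) j := by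
      intro a i j hij hi hj
      have hcases : ∀ k : Fin 5, a ∈ (![{x}, S1, W 2, S3, {y}] : Fin 5 → Set V) k →
          (k = 0 ∧ a = x) ∨ (k = 1 ∧ (a ∈ W 0 ∪ W 1) ∧ a ≠ x) ∨ (k = 2 ∧ a ∈ W 2) ∨
          (k = 3 ∧ (a ∈ W 3 ∪ W 4) ∧ a ≠ y) ∨ (k = 4 ∧ a = y) := by
        intro k hk
        fin_cases k
        · exact Or.inl ⟨rfl, hk⟩
        · exact Or.inr (Or.inl ⟨rfl, hk.1, hk.2⟩)
        · exact Or.inr (Or.inr (Or.inl ⟨rfl, hk⟩))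
        · exact Or.inr (Or.inr (Or.inr (Or.inl ⟨rfl, hk.1, hk.2⟩)))
        · exact Or.inr (Or.inr (Or.inr (Or.inr ⟨rfl, hk⟩)))
      have hxy : x ≠ y := fun hh => by
        have := humem x 0 4 hxW0 (hh ▸ hyW4); exact absurd this (by decide)
      rcases hcases i hi with ⟨hieq, hia⟩ | ⟨hieq, hia, hiax⟩ | ⟨hieq, hia⟩ |
        ⟨hieq, hia, hiay⟩ | ⟨hieq, hia⟩ <;>
      rcases hcases j hj with ⟨hjeq, hja⟩ | ⟨hjeq, hja, hjax⟩ | ⟨hjeq, hja⟩ |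
        ⟨hjeq, hja, hjay⟩ | ⟨hjeq, hja⟩ <;>
      subst hieq <;> subst hjeq <;> first
        | exact hij rfl
        | (subst hia; exact hjax rfl)
        | (subst hja; exact hiax rfl)
        | (subst hia; exact hjay rfl)
        | (subst hja; exact hiay rfl)
        | (subst hia; subst hja; exact hxy rfl)
        | (subst hja; exact hxy rfl)
        | (first
            | { rcases hia with hia | hia <;> rcases hja with hja | hja <;>
                  exact absurd (humem a _ _ hia hja) (by decide) }
            | { rcases hia with hia | hia <;>
                  exact absurd (humem a _ _ hia hja) (by decide) }
            | { rcases hja with hja | hja <;>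
                  exact absurd (humem a _ _ hia hja) (by decide) }
            | { exact absurd (humem a _ _ hia hja) (by decide) })
        | (subst hia; first
            | { rcases hja with hja | hja <;>
                  exact absurd (humem _ _ _ hxW0 hja) (by decide) }
            | exact absurd (humem _ _ _ hxW0 hja) (by decide))
        | (subst hja; first
            | { rcases hia with hia | hia <;>
                  exact absurd (humem _ _ _ hia hxW0) (by decide) }
            | exact absurd (humem _ _ _ hia hxW0) (by decide))
        | (subst hia; first
            | { rcases hja with hja | hja <;>
                  exact absurd (humem _ _ _ hyW4 hja) (by decide) }
            | exact absurd (humem _ _ _ hyW4 hja) (by decide))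
        | (subst hja; first
            | { rcases hia with hia | hia <;>
                  exact absurd (humem _ _ _ hia hyW4) (by decide) }
            | exact absurd (humem _ _ _ hia hyW4) (by decide))
    intro i j hij
    rw [Set.disjoint_left]
    exact fun {a} ha => key a i j hij ha
  · -- cover
    apply Set.eq_univ_of_forall
    intro a
    have haU : a ∈ ⋃ i, W i := hcover ▸ Set.mem_univ a
    obtain ⟨i, hi⟩ := Set.mem_iUnion.mp haU
    rw [Set.mem_iUnion]
    fin_cases i
    · by_cases hax : a = x
      · exact ⟨0, by simpa using hax⟩
      · exact ⟨1, Or.inl hi, hax⟩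
    · exact ⟨1, hW1S1 hi⟩
    · exact ⟨2, hi⟩
    · exact ⟨3, hW3S3 hi⟩
    · by_cases hay : a = y
      · exact ⟨4, by simpa using hay⟩
      · exact ⟨3, Or.inr hi, hay⟩
  · -- connected
    intro i
    fin_cases i
    · exact induce_singleton_connected G x
    · exact hS1conn
    · exact hconn 2
    · exact hS3conn
    · exact induce_singleton_connected G y
  · -- edges
    have hS1sub : S1 ⊆ W 0 ∪ W 1 := Set.diff_subset
    have hS3sub : S3 ⊆ W 3 ∪ W 4 := Set.diff_subset
    have no02 : ∀ a ∈ W 0 ∪ W 1, ∀ b ∈ W 3 ∪ W 4, ¬ G.Adj a b := by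
      rintro a (ha | ha) b (hb | hb) hab
      · exact noedge 0 3 (by decide) (by decide) a ha b hb hab
      · exact noedge 0 4 (by decide) (by decide) a ha b hb hab
      · exact noedge 1 3 (by decide) (by decide) a ha b hb hab
      · exact noedge 1 4 (by decide) (by decide) a ha b hb hab
    intro i j hij
    have hsym : ∀ a b : V, G.Adj a b → G.Adj b a := fun a b hab => hab.symm
    -- positive edges
    have e01 : ∃ a ∈ ({x} : Set V), ∃ b ∈ S1, G.Adj a b := by
      obtain ⟨b, hb, hab⟩ := hxadj; exact ⟨x, rfl, b, hb, hab⟩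
    have e12 : ∃ a ∈ S1, ∃ b ∈ W 2, G.Adj a b :=
      ⟨a12, hW1S1 ha12, b12, hb12, hab12⟩
    have e23 : ∃ a ∈ W 2, ∃ b ∈ S3, G.Adj a b :=
      ⟨a23, ha23, b23, hW3S3 hb23, hab23⟩
    have e34 : ∃ a ∈ S3, ∃ b ∈ ({y} : Set V), G.Adj a b := by
      obtain ⟨b, hb, hab⟩ := hyadj; exact ⟨b, hb, y, rfl, hab.symm⟩
    -- negative edges
    have n02 : ¬ ∃ a ∈ ({x} : Set V), ∃ b ∈ W 2, G.Adj a b := by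
      rintro ⟨a, ha, b, hb, hab⟩
      have ha' : a = x := ha
      exact noedge 0 2 (by decide) (by decide) x hxW0 b hb (ha' ▸ hab)
    have n03 : ¬ ∃ a ∈ ({x} : Set V), ∃ b ∈ S3, G.Adj a b := by
      rintro ⟨a, ha, b, hb, hab⟩
      have ha' : a = x := ha
      exact no02 x (Or.inl hxW0) b (hS3sub hb) (ha' ▸ hab)
    have n04 : ¬ ∃ a ∈ ({x} : Set V), ∃ b ∈ ({y} : Set V), G.Adj a b := by
      rintro ⟨a, ha, b, hb, hab⟩
      have ha' : a = x := ha
      have hb' : b = y := hb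
      exact no02 x (Or.inl hxW0) y (Or.inr hyW4) (ha' ▸ hb' ▸ hab)
    have n13 : ¬ ∃ a ∈ S1, ∃ b ∈ S3, G.Adj a b := by
      rintro ⟨a, ha, b, hb, hab⟩
      exact no02 a (hS1sub ha) b (hS3sub hb) hab
    have n14 : ¬ ∃ a ∈ S1, ∃ b ∈ ({y} : Set V), G.Adj a b := by
      rintro ⟨a, ha, b, hb, hab⟩
      have hb' : b = y := hb
      exact no02 a (hS1sub ha) y (Or.inr hyW4) (hb' ▸ hab)
    have n24 : ¬ ∃ a ∈ W 2, ∃ b ∈ ({y} : Set V), G.Adj a b := by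
      rintro ⟨a, ha, b, hb, hab⟩
      have hb' : b = y := hb
      exact noedge 2 4 (by decide) (by decide) a ha y hyW4 (hb' ▸ hab)
    have flipEx : ∀ (s t : Set V), (∃ a ∈ s, ∃ b ∈ t, G.Adj a b) →
        (∃ a ∈ t, ∃ b ∈ s, G.Adj a b) := by
      rintro s t ⟨a, ha, b, hb, hab⟩; exact ⟨b, hb, a, ha, hab.symm⟩
    fin_cases i <;> fin_cases j <;> first
      | exact absurd rfl hij
      | exact iff_of_true e01 (by decide)
      | exact iff_of_true (flipEx _ _ e01) (by decide)
      | exact iff_of_true e12 (by decide)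
      | exact iff_of_true (flipEx _ _ e12) (by decide)
      | exact iff_of_true e23 (by decide)
      | exact iff_of_true (flipEx _ _ e23) (by decide)
      | exact iff_of_true e34 (by decide)
      | exact iff_of_true (flipEx _ _ e34) (by decide)
      | exact iff_of_false n02 (by decide)
      | exact iff_of_false (fun hh => n02 (flipEx _ _ hh)) (by decide)
      | exact iff_of_false n03 (by decide)
      | exact iff_of_false (fun hh => n03 (flipEx _ _ hh)) (by decide)
      | exact iff_of_false n04 (by decide)
      | exact iff_of_false (fun hh => n04 (flipEx _ _ hh)) (by decide)
      | exact iff_of_false n13 (by decide)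
      | exact iff_of_false (fun hh => n13 (flipEx _ _ hh)) (by decide)
      | exact iff_of_false n14 (by decide)
      | exact iff_of_false (fun hh => n14 (flipEx _ _ hh)) (by decide)
      | exact iff_of_false n24 (by decide)
      | exact iff_of_false (fun hh => n24 (flipEx _ _ hh)) (by decide)
end

section
/- Let G be a connected finite simple graph. Then G has a P₅-witness structure if and only if there exist distinct non-adjacent vertices x, y ∈ V(G) with N(x) ≠ ∅, N(y) ≠ ∅ and N(x) ∩ N(y) = ∅, such that the triple (G − {x, y}, N(x), N(y)) admits a solution tri-partition, i.e., there is a partition (V₁, U, V₂) of V(G) \ {x, y} with N(x) ⊆ V₁, N(y) ⊆ V₂, the subgraphs of G − {x,y} induced by V₁, U, V₂ all connected, and (G − {x,y}) − U having exactly two connected components, namely those induced by V₁ and V₂. -/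
open SimpleGraph

variable {V : Type*}

lemma aux_del_far {α : Type*} {H : SimpleGraph α} (hH : H.Connected)
    (w x : α) (hmax : ∀ v, H.dist w v ≤ H.dist w x) (hxw : x ≠ w) :
    (H.induce ({x}ᶜ : Set α)).Connected := by
  classical
  apply H.induce_connected_of_patches w (by simpa using hxw.symm)
  intro v hv
  have hvx : v ≠ x := by simpa using hv
  obtain ⟨p, hp⟩ := (hH w v).exists_walk_length_eq_dist
  refine ⟨{u | u ∈ p.support}, ?_, p.start_mem_support, p.end_mem_support,
    p.connected_induce_support _ _⟩
  intro u hu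
  simp only [Set.mem_setOf_eq] at hu
  simp only [Set.mem_compl_iff, Set.mem_singleton_iff]
  rintro rfl
  have h1 : H.dist w u ≤ (p.takeUntil u hu).length := dist_le _
  have h2 : H.dist u v ≤ (p.dropUntil u hu).length := dist_le _
  have h3 : (p.takeUntil u hu).length + (p.dropUntil u hu).length = p.length := by
    rw [← Walk.length_append, p.take_spec hu]
  have h4 : H.dist w v ≤ H.dist w u := hmax v
  have h5 : (p.dropUntil u hu).length = 0 := by omega
  exact hvx (Walk.eq_of_length_eq_zero h5).symm

lemma conn_sdiff {G : SimpleGraph V} {S : Set V} {x : V}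
    (h : ((G.induce S).induce {v : ↥S | (v : V) ≠ x}).Connected) :
    (G.induce (S \ {x})).Connected := by
  have e : (G.induce S).induce {v : ↥S | (v : V) ≠ x} ≃g G.induce (S \ {x}) :=
    { toFun := fun a => ⟨a.1.1, a.1.2, a.2⟩
      invFun := fun a => ⟨⟨a.1, a.2.1⟩, a.2.2⟩
      left_inv := fun a => rfl
      right_inv := fun a => rfl
      map_rel_iff' := Iff.rfl }
  exact e.connected_iff.mp h

lemma pick [Fintype V] {G : SimpleGraph V} {S T : Set V} (hS : (G.induce S).Connected)
    (hT : (G.induce T).Connected) (hd : Disjoint S T) {w b : V} (hwS : w ∈ S) (hbT : b ∈ T)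
    (hadj : G.Adj w b) :
    ∃ x ∈ S, x ∉ T ∧ (G.induce ((S ∪ T) \ {x})).Connected := by
  by_cases hsing : ∀ v ∈ S, v = w
  · refine ⟨w, hwS, Set.disjoint_left.1 hd hwS, ?_⟩
    have hst : (S ∪ T) \ {w} = T := by
      ext v
      simp only [Set.mem_diff, Set.mem_union, Set.mem_singleton_iff]
      constructor
      · rintro ⟨hv | hv, hvw⟩
        · exact absurd (hsing v hv) hvw
        · exact hv
      · intro hv
        exact ⟨Or.inr hv, fun h => Set.disjoint_left.1 hd hwS (h ▸ hv)⟩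
    rw [hst]; exact hT
  · push_neg at hsing
    obtain ⟨v, hvS, hvw⟩ := hsing
    haveI : Nonempty ↥S := ⟨⟨w, hwS⟩⟩
    set H := G.induce S with hHdef
    have hH : H.Connected := hS
    obtain ⟨xx, hmax⟩ := Finite.exists_max (fun u : ↥S => H.dist ⟨w, hwS⟩ u)
    have hdpos : 0 < H.dist ⟨w, hwS⟩ ⟨v, hvS⟩ :=
      (hH ⟨w, hwS⟩ ⟨v, hvS⟩).pos_dist_of_ne (by simp [Subtype.ext_iff, Ne.symm hvw])
    have hxw : xx ≠ ⟨w, hwS⟩ := by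
      rintro rfl
      have h0 := hmax ⟨v, hvS⟩
      rw [SimpleGraph.dist_self] at h0
      omega
    have hc := aux_del_far hH ⟨w, hwS⟩ xx hmax hxw
    have hset : ({xx}ᶜ : Set ↥S) = {u : ↥S | (u : V) ≠ (xx : V)} := by
      ext u; simp [Subtype.ext_iff]
    rw [hset] at hc
    have hconn1 : (G.induce (S \ {(xx : V)})).Connected := conn_sdiff hc
    refine ⟨xx, xx.2, Set.disjoint_left.1 hd xx.2, ?_⟩
    have hst : (S ∪ T) \ {(xx : V)} = (S \ {(xx : V)}) ∪ T := by
      ext u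
      simp only [Set.mem_diff, Set.mem_union, Set.mem_singleton_iff]
      constructor
      · rintro ⟨hu | hu, hux⟩
        · exact Or.inl ⟨hu, hux⟩
        · exact Or.inr hu
      · rintro (⟨hu, hux⟩ | hu)
        · exact ⟨Or.inl hu, hux⟩
        · exact ⟨Or.inr hu, fun h => Set.disjoint_left.1 hd xx.2 (h ▸ hu)⟩
    rw [hst]
    have hwmem : w ∈ S \ {(xx : V)} :=
      ⟨hwS, fun h => hxw (Subtype.ext (by simpa using h.symm))⟩
    exact connected_induce_union hconn1.preconnected hT.preconnected hwmem hbT hadj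

private lemma forward [Fintype V] {G : SimpleGraph V} (hG : G.Connected) {W : Fin 5 → Set V}
    (hW : P5Witness G W) :
    (∃ x y : V, x ≠ y ∧ ¬G.Adj x y ∧
      (G.neighborSet x).Nonempty ∧ (G.neighborSet y).Nonempty ∧
      G.neighborSet x ∩ G.neighborSet y = ∅ ∧
      ∃ V₁ U V₂ : Set V,
        SolTriPart G (({x, y} : Set V)ᶜ)
          (G.neighborSet x) (G.neighborSet y) V₁ U V₂) := by
  obtain ⟨hne, hdisj, hcover, hconn, hedge⟩ := hW
  have mem : ∀ v : V, ∃ i, v ∈ W i := by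
    intro v
    have : v ∈ ⋃ i, W i := hcover ▸ Set.mem_univ v
    exact Set.mem_iUnion.mp this
  have huniq : ∀ (v : V) (i j : Fin 5), v ∈ W i → v ∈ W j → i = j := by
    intro v i j hi hj
    by_contra h
    exact Set.disjoint_left.1 (hdisj i j h) hi hj
  have hcls : ∀ (i j : Fin 5) (a b : V), a ∈ W i → b ∈ W j → G.Adj a b →
      i = j ∨ (i : ℕ) + 1 = (j : ℕ) ∨ (j : ℕ) + 1 = (i : ℕ) := by
    intro i j a b hai hbj hab
    by_cases h : i = j
    · exact Or.inl h
    · exact Or.inr ((hedge i j h).1 ⟨a, hai, b, hbj, hab⟩)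
  obtain ⟨a0, ha0, b1, hb1, hab01⟩ := (hedge 0 1 (by decide)).2 (by decide)
  obtain ⟨a3, ha3, b4, hb4, hab34⟩ := (hedge 3 4 (by decide)).2 (by decide)
  obtain ⟨x, hx0, hxnW1, hV1conn⟩ :=
    pick (hconn 0) (hconn 1) (hdisj 0 1 (by decide)) ha0 hb1 hab01
  obtain ⟨y, hy4, hynW3, hV2conn⟩ :=
    pick (hconn 4) (hconn 3) (hdisj 4 3 (by decide)) hb4 ha3 hab34.symm
  have hxonly : ∀ i, i ≠ 0 → x ∉ W i := fun i hi h => hi (huniq x i 0 h hx0)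
  have hyonly : ∀ i, i ≠ 4 → y ∉ W i := fun i hi h => hi (huniq y i 4 h hy4)
  have hxy : x ≠ y := fun h => hxonly 4 (by decide) (h ▸ hy4)
  have hnadj : ¬G.Adj x y := by
    intro h
    rcases hcls 0 4 x y hx0 hy4 h with h' | h' | h' <;> revert h' <;> decide
  set V₁ : Set V := (W 0 ∪ W 1) \ {x} with hV₁
  set U : Set V := W 2 with hU
  set V₂ : Set V := (W 4 ∪ W 3) \ {y} with hV₂
  have hNx : G.neighborSet x ⊆ V₁ := by
    intro b hb
    have hbx : b ≠ x := fun h => G.irrefl (h ▸ hb)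
    obtain ⟨j, hbj⟩ := mem b
    rcases hcls 0 j x b hx0 hbj hb with h' | h' | h'
    · exact ⟨Or.inl (h' ▸ hbj), hbx⟩
    · have : j = 1 := by omega
      exact ⟨Or.inr (this ▸ hbj), hbx⟩
    · omega
  have hNy : G.neighborSet y ⊆ V₂ := by
    intro b hb
    have hby : b ≠ y := fun h => G.irrefl (h ▸ hb)
    obtain ⟨j, hbj⟩ := mem b
    rcases hcls 4 j y b hy4 hbj hb with h' | h' | h'
    · exact ⟨Or.inl (h' ▸ hbj), hby⟩
    · omega
    · have : j = 3 := by omega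
      exact ⟨Or.inr (this ▸ hbj), hby⟩
  have hnbr : ∀ u v : V, u ≠ v → (G.neighborSet u).Nonempty := by
    intro u v huv
    obtain ⟨p⟩ := hG u v
    cases p with
    | nil => exact absurd rfl huv
    | cons h _ => exact ⟨_, h⟩
  have hxb1 : x ≠ b1 := fun h => hxnW1 (h ▸ hb1)
  have hya3 : y ≠ a3 := fun h => hynW3 (h ▸ ha3)
  -- disjointness facts
  have hdV1U : Disjoint V₁ U := by
    rw [Set.disjoint_left]
    rintro v ⟨hv | hv, _⟩ hvU
    · exact absurd (huniq v 0 2 hv hvU) (by decide)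
    · exact absurd (huniq v 1 2 hv hvU) (by decide)
  have hdUV2 : Disjoint U V₂ := by
    rw [Set.disjoint_left]
    rintro v hvU ⟨hv | hv, _⟩
    · exact absurd (huniq v 2 4 hvU hv) (by decide)
    · exact absurd (huniq v 2 3 hvU hv) (by decide)
  have hdV1V2 : Disjoint V₁ V₂ := by
    rw [Set.disjoint_left]
    rintro v ⟨hv | hv, _⟩ ⟨hv' | hv', _⟩ <;>
      [exact absurd (huniq v 0 4 hv hv') (by decide);
       exact absurd (huniq v 0 3 hv hv') (by decide);
       exact absurd (huniq v 1 4 hv hv') (by decide);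
       exact absurd (huniq v 1 3 hv hv') (by decide)]
  refine ⟨x, y, hxy, hnadj, hnbr x b1 hxb1, hnbr y a3 hya3, ?_, V₁, U, V₂, ?_⟩
  · rw [← Set.disjoint_iff_inter_eq_empty]
    exact (Set.disjoint_of_subset hNx hNy hdV1V2)
  have hunion : V₁ ∪ U ∪ V₂ = ({x, y} : Set V)ᶜ := by
    ext v
    simp only [Set.mem_union, Set.mem_compl_iff, Set.mem_insert_iff, Set.mem_singleton_iff,
      Set.mem_diff, hV₁, hU, hV₂]
    constructor
    · rintro ((⟨hv, hvx⟩ | hv) | ⟨hv, hvy⟩)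
      · push_neg
        refine ⟨hvx, fun h => ?_⟩
        subst h
        rcases hv with hv | hv
        · exact hyonly 0 (by decide) hv
        · exact hyonly 1 (by decide) hv
      · push_neg
        exact ⟨fun h => hxonly 2 (by decide) (h ▸ hv), fun h => hyonly 2 (by decide) (h ▸ hv)⟩
      · push_neg
        refine ⟨fun h => ?_, hvy⟩
        subst h
        rcases hv with hv | hv
        · exact hxonly 4 (by decide) hv
        · exact hxonly 3 (by decide) hv
    · intro hv
      push_neg at hv
      obtain ⟨hvx, hvy⟩ := hv
      obtain ⟨i, hvi⟩ := mem v
      fin_cases i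
      · exact Or.inl (Or.inl ⟨Or.inl hvi, hvx⟩)
      · exact Or.inl (Or.inl ⟨Or.inr hvi, hvx⟩)
      · exact Or.inl (Or.inr hvi)
      · exact Or.inr ⟨Or.inr hvi, hvy⟩
      · exact Or.inr ⟨Or.inl hvi, hvy⟩
  have hsub1 : V₁ ⊆ ({x, y} : Set V)ᶜ \ U := by
    intro v hv
    constructor
    · rw [← hunion]; exact Or.inl (Or.inl hv)
    · exact fun h => Set.disjoint_left.1 hdV1U hv h
  have hsub2 : V₂ ⊆ ({x, y} : Set V)ᶜ \ U := by
    intro v hv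
    constructor
    · rw [← hunion]; exact Or.inr hv
    · exact fun h => Set.disjoint_left.1 hdUV2 h hv
  refine ⟨hunion, hdV1U, hdUV2, hdV1V2, hNx, hNy, hV1conn, hconn 2, hV2conn,
    ⟨hsub1, hV1conn, ?_⟩, ⟨hsub2, hV2conn, ?_⟩⟩
  · rintro a ⟨ha, hax⟩ b ⟨hbA, hbU⟩ hab
    simp only [Set.mem_compl_iff, Set.mem_insert_iff, Set.mem_singleton_iff] at hbA
    push_neg at hbA
    obtain ⟨hbx, hby⟩ := hbA
    obtain ⟨j, hbj⟩ := mem b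
    have hj2 : j ≠ 2 := fun h => hbU (show b ∈ W 2 from h ▸ hbj)
    rcases ha with ha | ha
    · rcases hcls 0 j a b ha hbj hab with h' | h' | h'
      · exact ⟨Or.inl (h' ▸ hbj), hbx⟩
      · have : j = 1 := by omega
        exact ⟨Or.inr (this ▸ hbj), hbx⟩
      · omega
    · rcases hcls 1 j a b ha hbj hab with h' | h' | h'
      · exact ⟨Or.inr (h' ▸ hbj), hbx⟩
      · have : j = 2 := by omega
        exact absurd this hj2
      · have : j = 0 := by omega
        exact ⟨Or.inl (this ▸ hbj), hbx⟩
  · rintro a ⟨ha, hay⟩ b ⟨hbA, hbU⟩ hab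
    simp only [Set.mem_compl_iff, Set.mem_insert_iff, Set.mem_singleton_iff] at hbA
    push_neg at hbA
    obtain ⟨hbx, hby⟩ := hbA
    obtain ⟨j, hbj⟩ := mem b
    have hj2 : j ≠ 2 := fun h => hbU (show b ∈ W 2 from h ▸ hbj)
    rcases ha with ha | ha
    · rcases hcls 4 j a b ha hbj hab with h' | h' | h'
      · exact ⟨Or.inl (h' ▸ hbj), hby⟩
      · omega
      · have : j = 3 := by omega
        exact ⟨Or.inr (this ▸ hbj), hby⟩
    · rcases hcls 3 j a b ha hbj hab with h' | h' | h'
      · exact ⟨Or.inr (h' ▸ hbj), hby⟩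
      · have : j = 4 := by omega
        exact ⟨Or.inl (this ▸ hbj), hby⟩
      · have : j = 2 := by omega
        exact absurd this hj2

private lemma backward [Fintype V] {G : SimpleGraph V} (hG : G.Connected)
    {x y : V} (hxy : x ≠ y) (hnadj : ¬G.Adj x y)
    (hNx : (G.neighborSet x).Nonempty) (hNy : (G.neighborSet y).Nonempty)
    {V₁ U V₂ : Set V}
    (hsol : SolTriPart G (({x, y} : Set V)ᶜ) (G.neighborSet x) (G.neighborSet y) V₁ U V₂) :
    ∃ W : Fin 5 → Set V, P5Witness G W := by
  classical
  obtain ⟨hunion, hd1U, hdU2, hd12, hZ1, hZ2, hc1, hcU, hc2, hcomp1, hcomp2⟩ := hsol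
  have hsubA : ∀ v, v ∈ V₁ ∪ U ∪ V₂ → v ≠ x ∧ v ≠ y := by
    intro v hv
    have : v ∈ ({x, y} : Set V)ᶜ := hunion ▸ hv
    simp only [Set.mem_compl_iff, Set.mem_insert_iff, Set.mem_singleton_iff] at this
    push_neg at this
    exact this
  have hx1 : x ∉ V₁ := fun h => (hsubA x (Or.inl (Or.inl h))).1 rfl
  have hxU : x ∉ U := fun h => (hsubA x (Or.inl (Or.inr h))).1 rfl
  have hx2 : x ∉ V₂ := fun h => (hsubA x (Or.inr h)).1 rfl
  have hy1 : y ∉ V₁ := fun h => (hsubA y (Or.inl (Or.inl h))).2 rfl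
  have hyU : y ∉ U := fun h => (hsubA y (Or.inl (Or.inr h))).2 rfl
  have hy2 : y ∉ V₂ := fun h => (hsubA y (Or.inr h)).2 rfl
  have part : ∀ v : V, v = x ∨ v = y ∨ v ∈ V₁ ∨ v ∈ U ∨ v ∈ V₂ := by
    intro v
    by_cases hvx : v = x
    · exact Or.inl hvx
    by_cases hvy : v = y
    · exact Or.inr (Or.inl hvy)
    have : v ∈ ({x, y} : Set V)ᶜ := by
      simp only [Set.mem_compl_iff, Set.mem_insert_iff, Set.mem_singleton_iff]
      push_neg
      exact ⟨hvx, hvy⟩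
    rw [← hunion] at this
    rcases this with (h | h) | h
    · exact Or.inr (Or.inr (Or.inl h))
    · exact Or.inr (Or.inr (Or.inr (Or.inl h)))
    · exact Or.inr (Or.inr (Or.inr (Or.inr h)))
  -- subset facts
  have hsub2 : V₂ ⊆ ({x, y} : Set V)ᶜ \ U := hcomp2.1
  -- non-edge facts
  have nxU : ∀ u ∈ U, ¬G.Adj x u := fun u hu h => Set.disjoint_left.1 hd1U (hZ1 h) hu
  have nx2 : ∀ u ∈ V₂, ¬G.Adj x u := fun u hu h => Set.disjoint_left.1 hd12 (hZ1 h) hu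
  have nyU : ∀ u ∈ U, ¬G.Adj y u := fun u hu h => Set.disjoint_left.1 hdU2 hu (hZ2 h)
  have ny1 : ∀ u ∈ V₁, ¬G.Adj y u := fun u hu h => Set.disjoint_left.1 hd12 hu (hZ2 h)
  have n12 : ∀ a ∈ V₁, ∀ b ∈ V₂, ¬G.Adj a b := by
    intro a ha b hb h
    exact Set.disjoint_left.1 hd12 (hcomp1.2.2 a ha b (hsub2 hb) h) hb
  -- edge facts
  obtain ⟨n, hn⟩ := hNx
  obtain ⟨m, hm⟩ := hNy
  have hnV₁ : n ∈ V₁ := hZ1 hn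
  have hmV₂ : m ∈ V₂ := hZ2 hm
  obtain ⟨⟨u0, hu0⟩⟩ := hcU.nonempty
  have eV1U : ∃ a ∈ V₁, ∃ b ∈ U, G.Adj a b := by
    obtain ⟨p⟩ := hG n u0
    have hnS : n ∈ insert x V₁ := Set.mem_insert_of_mem _ hnV₁
    have huS : u0 ∉ insert x V₁ := by
      simp only [Set.mem_insert_iff]
      push_neg
      exact ⟨fun h => hxU (h ▸ hu0), fun h => Set.disjoint_left.1 hd1U h hu0⟩
    obtain ⟨d, _, hdf, hds⟩ := p.exists_boundary_dart (insert x V₁) hnS huS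
    have hadj : G.Adj d.fst d.snd := d.adj
    rcases hdf with hdx | hdf
    · exact absurd (Set.mem_insert_of_mem _ (hZ1 (hdx ▸ hadj))) hds
    rcases part d.snd with h | h | h | h | h
    · exact absurd (h ▸ Set.mem_insert _ _) hds
    · exact absurd (hZ2 (h ▸ hadj).symm) (fun hh => Set.disjoint_left.1 hd12 hdf hh)
    · exact absurd (Set.mem_insert_of_mem _ h) hds
    · exact ⟨d.fst, hdf, d.snd, h, hadj⟩
    · exact absurd hadj (n12 _ hdf _ h)
  have eUV2 : ∃ a ∈ U, ∃ b ∈ V₂, G.Adj a b := by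
    obtain ⟨p⟩ := hG m u0
    have hmS : m ∈ insert y V₂ := Set.mem_insert_of_mem _ hmV₂
    have huS : u0 ∉ insert y V₂ := by
      simp only [Set.mem_insert_iff]
      push_neg
      exact ⟨fun h => hyU (h ▸ hu0), fun h => Set.disjoint_left.1 hdU2 hu0 h⟩
    obtain ⟨d, _, hdf, hds⟩ := p.exists_boundary_dart (insert y V₂) hmS huS
    have hadj : G.Adj d.fst d.snd := d.adj
    rcases hdf with hdy | hdf
    · exact absurd (Set.mem_insert_of_mem _ (hZ2 (hdy ▸ hadj))) hds
    rcases part d.snd with h | h | h | h | h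
    · exact absurd (hZ1 (h ▸ hadj).symm) (fun hh => Set.disjoint_left.1 hd12 hh hdf)
    · exact absurd (h ▸ Set.mem_insert _ _) hds
    · exact absurd hadj.symm (n12 _ h _ hdf)
    · exact ⟨d.snd, h, d.fst, hdf, hadj.symm⟩
    · exact absurd (Set.mem_insert_of_mem _ h) hds
  have hsing : ∀ v : V, (G.induce ({v} : Set V)).Connected := by
    intro v
    rw [connected_iff]
    refine ⟨fun a b => ?_, ⟨⟨v, rfl⟩⟩⟩
    have : a = b := Subtype.ext (a.2.trans b.2.symm)
    rw [this]
  refine ⟨![{x}, V₁, U, V₂, {y}], ?_, ?_, ?_, ?_, ?_⟩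
  · intro i
    fin_cases i
    · exact ⟨x, rfl⟩
    · exact ⟨n, hnV₁⟩
    · exact ⟨u0, hu0⟩
    · exact ⟨m, hmV₂⟩
    · exact ⟨y, rfl⟩
  · have D01 : Disjoint ({x} : Set V) V₁ := Set.disjoint_singleton_left.mpr hx1
    have D02 : Disjoint ({x} : Set V) U := Set.disjoint_singleton_left.mpr hxU
    have D03 : Disjoint ({x} : Set V) V₂ := Set.disjoint_singleton_left.mpr hx2
    have D04 : Disjoint ({x} : Set V) ({y} : Set V) :=
      Set.disjoint_singleton_left.mpr (by simpa using hxy)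
    have D14 : Disjoint V₁ ({y} : Set V) := Set.disjoint_singleton_right.mpr hy1
    have D24 : Disjoint U ({y} : Set V) := Set.disjoint_singleton_right.mpr hyU
    have D34 : Disjoint V₂ ({y} : Set V) := Set.disjoint_singleton_right.mpr hy2
    intro i j hij
    fin_cases i <;> fin_cases j <;>
      simp only [Matrix.cons_val_zero, Matrix.cons_val_one, Matrix.head_cons,
        Matrix.cons_val_two, Matrix.tail_cons, Matrix.cons_val_three, Matrix.cons_val_four,
        Matrix.head_fin_const, Fin.isValue] <;>
      first
        | exact absurd rfl hij
        | exact D01 | exact D01.symm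
        | exact D02 | exact D02.symm
        | exact D03 | exact D03.symm
        | exact D04 | exact D04.symm
        | exact hd1U | exact hd1U.symm
        | exact hd12 | exact hd12.symm
        | exact D14 | exact D14.symm
        | exact hdU2 | exact hdU2.symm
        | exact D24 | exact D24.symm
        | exact D34 | exact D34.symm
  · ext v
    simp only [Set.mem_iUnion, Set.mem_univ, iff_true]
    rcases part v with h | h | h | h | h
    · exact ⟨0, by simpa using h⟩
    · exact ⟨4, by simpa using h⟩
    · exact ⟨1, by simpa using h⟩
    · exact ⟨2, by simpa using h⟩
    · exact ⟨3, by simpa using h⟩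
  · intro i
    fin_cases i
    · exact hsing x
    · exact hc1
    · exact hcU
    · exact hc2
    · exact hsing y
  · intro i j hij
    have sym : ∀ {P Q : Set V}, (∃ a ∈ P, ∃ b ∈ Q, G.Adj a b) → (∃ a ∈ Q, ∃ b ∈ P, G.Adj a b) := by
      rintro P Q ⟨a, ha, b, hb, h⟩
      exact ⟨b, hb, a, ha, h.symm⟩
    have E01 : ∃ a ∈ ({x} : Set V), ∃ b ∈ V₁, G.Adj a b := ⟨x, rfl, n, hnV₁, hn⟩
    have E34 : ∃ a ∈ V₂, ∃ b ∈ ({y} : Set V), G.Adj a b := ⟨m, hmV₂, y, rfl, hm.symm⟩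
    have N02 : ¬∃ a ∈ ({x} : Set V), ∃ b ∈ U, G.Adj a b := by
      rintro ⟨a, rfl, b, hb, h⟩
      exact nxU b hb h
    have N03 : ¬∃ a ∈ ({x} : Set V), ∃ b ∈ V₂, G.Adj a b := by
      rintro ⟨a, rfl, b, hb, h⟩
      exact nx2 b hb h
    have N04 : ¬∃ a ∈ ({x} : Set V), ∃ b ∈ ({y} : Set V), G.Adj a b := by
      rintro ⟨a, rfl, b, rfl, h⟩
      exact hnadj h
    have N13 : ¬∃ a ∈ V₁, ∃ b ∈ V₂, G.Adj a b := by
      rintro ⟨a, ha, b, hb, h⟩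
      exact n12 a ha b hb h
    have N14 : ¬∃ a ∈ V₁, ∃ b ∈ ({y} : Set V), G.Adj a b := by
      rintro ⟨a, ha, b, rfl, h⟩
      exact ny1 a ha h.symm
    have N24 : ¬∃ a ∈ U, ∃ b ∈ ({y} : Set V), G.Adj a b := by
      rintro ⟨a, ha, b, rfl, h⟩
      exact nyU a ha h.symm
    fin_cases i <;> fin_cases j <;>
      simp only [Matrix.cons_val_zero, Matrix.cons_val_one, Matrix.head_cons,
        Matrix.cons_val_two, Matrix.tail_cons, Matrix.cons_val_three, Matrix.cons_val_four,
        Matrix.head_fin_const, Fin.isValue] <;>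
      first
        | exact absurd rfl hij
        | exact iff_of_true E01 (by decide)
        | exact iff_of_true (sym E01) (by decide)
        | exact iff_of_true eV1U (by decide)
        | exact iff_of_true (sym eV1U) (by decide)
        | exact iff_of_true eUV2 (by decide)
        | exact iff_of_true (sym eUV2) (by decide)
        | exact iff_of_true E34 (by decide)
        | exact iff_of_true (sym E34) (by decide)
        | exact iff_of_false N02 (by decide)
        | exact iff_of_false (fun h => N02 (sym h)) (by decide)
        | exact iff_of_false N03 (by decide)
        | exact iff_of_false (fun h => N03 (sym h)) (by decide)
        | exact iff_of_false N04 (by decide)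
        | exact iff_of_false (fun h => N04 (sym h)) (by decide)
        | exact iff_of_false N13 (by decide)
        | exact iff_of_false (fun h => N13 (sym h)) (by decide)
        | exact iff_of_false N14 (by decide)
        | exact iff_of_false (fun h => N14 (sym h)) (by decide)
        | exact iff_of_false N24 (by decide)
        | exact iff_of_false (fun h => N24 (sym h)) (by decide)

theorem P5_witness_iff_three_dcs
    [Fintype V] (G : SimpleGraph V) (hG : G.Connected) :
    (∃ W : Fin 5 → Set V, P5Witness G W) ↔
    (∃ x y : V, x ≠ y ∧ ¬G.Adj x y ∧
      (G.neighborSet x).Nonempty ∧ (G.neighborSet y).Nonempty ∧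
      G.neighborSet x ∩ G.neighborSet y = ∅ ∧
      ∃ V₁ U V₂ : Set V,
        SolTriPart G (({x, y} : Set V)ᶜ)
          (G.neighborSet x) (G.neighborSet y) V₁ U V₂) := by
  constructor
  · rintro ⟨W, hW⟩
    exact forward hG hW
  · rintro ⟨x, y, hxy, hnadj, hNx, hNy, _, V₁, U, V₂, hsol⟩
    exact backward hG hxy hnadj hNx hNy hsol
end
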